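/- arXiv:2102.09100 — 2 statements merged into one kernel-verified Lean document; each statement's English description precedes it below -/
import Mathlib

section
/- There exist absolute constants C₀, c₀ > 0 such that the following holds for every integer Δ ≥ 1, every κ, ε > 0, every n and every p ∈ (n^{−2}, 1) satisfying n p^{Δ+1} ≥ C₀ log n / (ε² log(1/p)). There is a (possibly empty) exceptional set E⋆(κ,ε) ⊆ A_{n,2} with μ_p(E⋆(κ,ε)) ≤ p^{c₀ κ n²} such that every A ∈ A_{n,2} \ E⋆(κ,ε) admits a decomposition A = A_str + A_rand, where A_str = p J_{n,2} + Σ_{i=1}^k α_i T_i for some k ≥ 0, real numbers α_1, …, α_k and cut matrices T_1, …, T_k with Σ_{i=1}^k ‖T_i‖_{Δ,2} ≤ κ ε^{−2} p^{−2} n², and ‖A_rand‖*_{Δ,2} ≤ ε p. -/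
open scoped Classical
open Finset

/-! ### Tensors -/

/-- Order-`r` tensors of size `n`. -/
abbrev Tensor (n r : ℕ) : Type := (Fin r → Fin n) → ℝ

/-- `r`-element subsets of `[n]`. -/
abbrev Idx (n r : ℕ) := {I : Finset (Fin n) // I.card = r}

/-- Evaluation of a tensor at an `r`-element subset, via the monotone enumeration. -/
noncomputable def setEval {n r : ℕ} (Z : Tensor n r) (I : Idx n r) : ℝ :=
  Z fun k => ((I.1.orderIsoOfFin I.2) k).1

/-- Symmetric Boolean tensors supported on injective tuples (adjacency tensors). -/
def adjSet (n r : ℕ) : Set (Tensor n r) :=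
  {A | (∀ (σ : Equiv.Perm (Fin r)) (x : Fin r → Fin n), A (x ∘ σ) = A x) ∧
    (∀ x, A x = 0 ∨ A x = 1) ∧ ∀ x, ¬Function.Injective x → A x = 0}

/-- Symmetric `[0,1]`-valued tensors supported on injective tuples. -/
def wtSet (n r : ℕ) : Set (Tensor n r) :=
  {Q | (∀ (σ : Equiv.Perm (Fin r)) (x : Fin r → Fin n), Q (x ∘ σ) = Q x) ∧
    (∀ x, 0 ≤ Q x ∧ Q x ≤ 1) ∧ ∀ x, ¬Function.Injective x → Q x = 0}

/-- The tensor equal to `1` whenever all coordinates are distinct and `0` otherwise. -/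
noncomputable def Jten (n r : ℕ) : Tensor n r := fun x => if Function.Injective x then 1 else 0

/-! ### Random hypergraphs -/

/-- A selection of hyperedges: a Boolean function on `r`-element subsets of `[n]`. -/
abbrev EdgeSel (n r : ℕ) := Idx n r → Bool

/-- The adjacency tensor of a hyperedge selection. -/
noncomputable def adjOf {n r : ℕ} (ω : EdgeSel n r) : Tensor n r := fun x =>
  if h : Function.Injective x then
    (if ω ⟨Finset.image x Finset.univ, by
        rw [Finset.card_image_of_injective _ h, Finset.card_univ, Fintype.card_fin]⟩
      then 1 else 0)
  else 0

/-- The product-Bernoulli weight of a hyperedge selection, with success probability `Q(I)`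
for the edge `I`. -/
noncomputable def wWeight {n r : ℕ} (Q : Tensor n r) (ω : EdgeSel n r) : ℝ :=
  ∏ I : Idx n r, if ω I then setEval Q I else 1 - setEval Q I

/-- Probability of a set of tensors under the inhomogeneous Erdős–Rényi measure `μ_Q`. -/
noncomputable def muQ (n r : ℕ) (Q : Tensor n r) (E : Set (Tensor n r)) : ℝ :=
  ∑ ω : EdgeSel n r, if adjOf ω ∈ E then wWeight Q ω else 0

/-- Probability of a set of tensors under the Erdős–Rényi measure `μ_p`. -/
noncomputable def muP (n r : ℕ) (p : ℝ) : Set (Tensor n r) → ℝ := muQ n r fun _ => p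

/-- Expectation of a functional of the adjacency tensor under `μ_Q`. -/
noncomputable def expQ (n r : ℕ) (Q : Tensor n r) (f : Tensor n r → ℝ) : ℝ :=
  ∑ ω : EdgeSel n r, wWeight Q ω * f (adjOf ω)

/-- Variance of a functional of the adjacency tensor under `μ_Q`. -/
noncomputable def varQ (n r : ℕ) (Q : Tensor n r) (f : Tensor n r → ℝ) : ℝ :=
  expQ n r Q fun A => (f A - expQ n r Q f) ^ 2

/-! ### Relative entropy -/

/-- Relative entropy of Bernoulli(x) with respect to Bernoulli(p). -/
noncomputable def entBer (p x : ℝ) : ℝ :=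
  x * Real.log (x / p) + (1 - x) * Real.log ((1 - x) / (1 - p))

/-- `I_p(Q)`, the relative entropy of `μ_Q` with respect to `μ_p`. -/
noncomputable def entRate (n r : ℕ) (p : ℝ) (Q : Tensor n r) : ℝ :=
  ∑ I : Idx n r, entBer p (setEval Q I)

/-! ### Weighted bases and test tensors -/

/-- The data of a weighted base over an `r`-element set (identified with `Fin r` via the
bijection `ι`). -/
structure WBase (r : ℕ) where
  B : Finset (Finset (Fin r))
  dstar : ℕ
  d : Finset (Fin r) → ℕ

/-- The axioms of a weighted base: `∅ ∈ B`, members are proper subsets, nonempty members are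
pairwise incomparable, and the weights satisfy `d_b ≤ d_*`, `d_∅ = 0`. -/
def WBase.Valid {r : ℕ} (Bw : WBase r) : Prop :=
  ∅ ∈ Bw.B ∧ (∀ b ∈ Bw.B, b ≠ Finset.univ) ∧
    (∀ b₁ ∈ Bw.B, ∀ b₂ ∈ Bw.B, b₁.Nonempty → b₂.Nonempty → b₁ ≠ b₂ → ¬b₁ ⊆ b₂) ∧
    (∀ b ∈ Bw.B, Bw.d b ≤ Bw.dstar) ∧ Bw.d ∅ = 0

/-- A system of Boolean factors, one for each subset of coordinates. -/
abbrev Factors (n r : ℕ) := (b : Finset (Fin r)) → ({v : Fin r // v ∈ b} → Fin n) → Bool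

/-- The test tensor with factor system `f`: the entrywise product over `b ∈ B` of the Boolean
tensors `t_b ∘ π_b`. -/
noncomputable def testFun {n r : ℕ} (Bw : WBase r) (f : Factors n r) : Tensor n r := fun x =>
  ∏ b ∈ Bw.B, if f b (fun v => x v.1) then (1 : ℝ) else 0

/-- `‖t_b‖₁`, the number of inputs on which the factor `t_b` equals one. -/
noncomputable def facNorm1 {n r : ℕ} (f : Factors n r) (b : Finset (Fin r)) : ℝ :=
  ((Finset.univ.filter fun y : {v : Fin r // v ∈ b} → Fin n => f b y = true).card : ℝ)

/-- The norm `‖T‖_Bw` of a test tensor, presented by its factor system. -/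
noncomputable def testNorm {n r : ℕ} (p : ℝ) (Bw : WBase r) (f : Factors n r) : ℝ :=
  max (∑ x : Fin r → Fin n, |testFun Bw f x|)
    (⨆ b ∈ Bw.B, (n : ℝ) ^ (r - b.card) * p ^ (Bw.dstar - Bw.d b) * facNorm1 f b)

/-- The dual seminorm `‖Z‖*_Bw = max_{T ∈ T_Bw} |⟨Z,T⟩| / ‖T‖_Bw`. -/
noncomputable def dualNorm {r : ℕ} (n : ℕ) (p : ℝ) (Bw : WBase r) (Z : Tensor n r) : ℝ :=
  ⨆ f : Factors n r,
    if ∃ x, testFun Bw f x ≠ 0 then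
      |∑ x : Fin r → Fin n, Z x * testFun Bw f x| / testNorm p Bw f
    else 0

/-- `W_{n,p}(Bw) = min_{b ∈ B} n^{r-|b|} p^{d_* - d_b + 2}`. -/
noncomputable def Wnp (n : ℕ) {r : ℕ} (p : ℝ) (Bw : WBase r) : ℝ :=
  sInf ((fun b => (n : ℝ) ^ (r - b.card) * p ^ (Bw.dstar - Bw.d b + 2)) '' ↑Bw.B)

/-! ### Families of weighted bases -/

/-- `‖Z‖*_BB = max_e ‖Z‖*_{Bw(e)}` for a finite family of weighted bases. -/
noncomputable def famDual {r m : ℕ} (n : ℕ) (p : ℝ) (BB : Fin m → WBase r)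
    (Z : Tensor n r) : ℝ :=
  ⨆ i, dualNorm n p (BB i) Z

/-- `W_{n,p}(BB) = min_e W_{n,p}(Bw(e))` for a finite family of weighted bases. -/
noncomputable def famW {r m : ℕ} (n : ℕ) (p : ℝ) (BB : Fin m → WBase r) : ℝ :=
  ⨅ i, Wnp n p (BB i)

/-- `U_BB(Q, δ)`, the `δ`-neighborhood of `Q` in `A_{n,r}` under `‖·‖*_BB`. -/
def nbhdFam {r m n : ℕ} (p δ : ℝ) (BB : Fin m → WBase r) (Q : Tensor n r) :
    Set (Tensor n r) :=
  {A | A ∈ adjSet n r ∧ famDual n p BB (fun x => Q x - A x) ≤ δ}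

/-- The outer approximation `(E)_{BB,δ} = ⋃_{A ∈ E} conv(U_BB(A,δ))`. -/
def outerFam {r m n : ℕ} (p δ : ℝ) (BB : Fin m → WBase r) (E : Set (Tensor n r)) :
    Set (Tensor n r) :=
  ⋃ A ∈ E, convexHull ℝ (nbhdFam p δ BB A)

/-- The inner approximation `(E)°_{BB,δ} = {Q ∈ Q_{n,r} : U_BB(Q,δ) ⊆ E}`. -/
def innerFam {r m n : ℕ} (p δ : ℝ) (BB : Fin m → WBase r) (E : Set (Tensor n r)) :
    Set (Tensor n r) :=
  {Q | Q ∈ wtSet n r ∧ nbhdFam p δ BB Q ⊆ E}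

/-! ### Hypergraphs -/

/-- An `r`-uniform hypergraph: a finite vertex type and a finite set of `r`-element edges. -/
structure RGraph (r : ℕ) where
  V : Type
  [fV : Fintype V]
  [dV : DecidableEq V]
  E : Finset (Finset V)
  card_edge : ∀ e ∈ E, e.card = r

attribute [instance] RGraph.fV RGraph.dV

/-- Evaluation `S(φ(e))` of a tensor at the image of an edge (zero if `φ` is not injective
on the edge). -/
noncomputable def edgeEval {n r : ℕ} {V : Type} [DecidableEq V] (Z : Tensor n r)
    (φ : V → Fin n) (e : Finset V) : ℝ :=
  if h : (e.image φ).card = r then setEval Z ⟨e.image φ, h⟩ else 0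

/-- Homomorphism count of the subgraph of `H` with edge set `E₀` (on the full vertex set). -/
noncomputable def homE {n r : ℕ} (H : RGraph r) (E₀ : Finset (Finset H.V))
    (Q : Tensor n r) : ℝ :=
  ∑ φ : H.V → Fin n, ∏ e ∈ E₀, edgeEval Q φ e

/-- `hom(H, Q)`. -/
noncomputable def homR {n r : ℕ} (H : RGraph r) (Q : Tensor n r) : ℝ := homE H H.E Q

/-- `t(H, Q) = hom(H,Q) / n^{v(H)}`. -/
noncomputable def tR {n r : ℕ} (H : RGraph r) (Q : Tensor n r) : ℝ :=
  homR H Q / (n : ℝ) ^ Fintype.card H.V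

/-- `t_p(H, Q) = hom(H,Q) / (n^{v(H)} p^{e(H)})`. -/
noncomputable def tp {n r : ℕ} (H : RGraph r) (p : ℝ) (Q : Tensor n r) : ℝ :=
  homR H Q / ((n : ℝ) ^ Fintype.card H.V * p ^ H.E.card)

/-- Multilinear homomorphism count for a collection of tensors indexed by the edges. -/
noncomputable def homColl {n r : ℕ} (H : RGraph r) (S : {e // e ∈ H.E} → Tensor n r) : ℝ :=
  ∑ φ : H.V → Fin n, ∏ e : {e // e ∈ H.E}, edgeEval (S e) φ e.1

/-- Normalized multilinear homomorphism count. -/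
noncomputable def tpColl {n r : ℕ} (H : RGraph r) (p : ℝ)
    (S : {e // e ∈ H.E} → Tensor n r) : ℝ :=
  homColl H S / ((n : ℝ) ^ Fintype.card H.V * p ^ H.E.card)

/-- Signed multilinear homomorphism count: positive edges contribute `S^e(φ(e))`,
negative edges contribute `1 - S^e(φ(e))`. -/
noncomputable def shomColl {n r : ℕ} (H : RGraph r) (sgn : Finset H.V → Bool)
    (S : {e // e ∈ H.E} → Tensor n r) : ℝ :=
  ∑ φ : H.V → Fin n, ∏ e : {e // e ∈ H.E},
    if sgn e.1 then edgeEval (S e) φ e.1 else 1 - edgeEval (S e) φ e.1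

/-- Signed homomorphism count of the subgraph with edge set `E₀`, with a single tensor. -/
noncomputable def shomE {n r : ℕ} (H : RGraph r) (sgn : Finset H.V → Bool)
    (E₀ : Finset (Finset H.V)) (Q : Tensor n r) : ℝ :=
  ∑ φ : H.V → Fin n, ∏ e ∈ E₀, (if sgn e then edgeEval Q φ e else 1 - edgeEval Q φ e)

/-! ### Degrees -/

/-- Degree of a vertex. -/
def vdeg {r : ℕ} (H : RGraph r) (v : H.V) : ℕ := (H.E.filter fun e => v ∈ e).card

/-- Maximum degree `Δ(H)`. -/
def maxDeg {r : ℕ} (H : RGraph r) : ℕ := Finset.univ.sup fun v => vdeg H v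

/-- Maximum degree with respect to a subset of the edges. -/
def maxDegOn {r : ℕ} (H : RGraph r) (E₀ : Finset (Finset H.V)) : ℕ :=
  Finset.univ.sup fun v : H.V => (E₀.filter fun e => v ∈ e).card

/-- `d^H(U)`: the number of edges `e' ≠ U` meeting `U`. -/
def edeg {V : Type} [DecidableEq V] (E₀ : Finset (Finset V)) (U : Finset V) : ℕ :=
  (E₀.filter fun e' => e' ≠ U ∧ (e' ∩ U).Nonempty).card

/-- `d^H_b(U)`: the number of edges `e'` with `∅ ≠ e' ∩ U ⊆ b`. -/
def edegSub {V : Type} [DecidableEq V] (E₀ : Finset (Finset V)) (b U : Finset V) : ℕ :=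
  (E₀.filter fun e' => (e' ∩ U).Nonempty ∧ e' ∩ U ⊆ b).card

/-! ### Base systems over a hypergraph -/

/-- The data of a base system over `H`: for each edge, an identification of `Fin r` with the
edge and a base of subsets of `Fin r`. -/
structure BaseSystem {r : ℕ} (H : RGraph r) where
  emb : (e : {e // e ∈ H.E}) → Fin r → H.V
  emb_inj : ∀ e, Function.Injective (emb e)
  emb_mem : ∀ e (k : Fin r), emb e k ∈ e.1
  B : (e : {e // e ∈ H.E}) → Finset (Finset (Fin r))

/-- The image in the vertex set of a subset of coordinates. -/
def BaseSystem.vimage {r : ℕ} {H : RGraph r} (S : BaseSystem H) (e : {e // e ∈ H.E})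
    (b : Finset (Fin r)) : Finset H.V :=
  b.image (S.emb e)

/-- Validity plus `H`-domination of a base system: each base satisfies the base axioms and
every overlap `e ∩ e'` is contained in (the image of) some member of the base. -/
def BaseSystem.Good {r : ℕ} {H : RGraph r} (S : BaseSystem H) : Prop :=
  ∀ e : {e // e ∈ H.E},
    ∅ ∈ S.B e ∧ (∀ b ∈ S.B e, b ≠ Finset.univ) ∧
      (∀ b₁ ∈ S.B e, ∀ b₂ ∈ S.B e, b₁.Nonempty → b₂.Nonempty → b₁ ≠ b₂ → ¬b₁ ⊆ b₂) ∧
      (∀ e' ∈ H.E, e' ≠ e.1 → ∃ b ∈ S.B e, e' ∩ e.1 ⊆ S.vimage e b)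

/-- The weighted base at an edge `e`, with weights given by the degree counts of `E₀`
(`d_* = d^{E₀}(e)`, `d_b = d^{E₀}_b(e)`). -/
def BaseSystem.wb {r : ℕ} {H : RGraph r} (S : BaseSystem H) (E₀ : Finset (Finset H.V))
    (e : {e // e ∈ H.E}) : WBase r :=
  { B := S.B e
    dstar := edeg E₀ e.1
    d := fun b => edegSub E₀ (S.vimage e b) e.1 }

/-- The seminorm `‖Z‖*_BB = max_{e ∈ E(H)} ‖Z‖*_{Bw(e)}` of a base system with weights
from `E₀`. -/
noncomputable def bsDualNorm {n r : ℕ} {H : RGraph r} (S : BaseSystem H)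
    (E₀ : Finset (Finset H.V)) (p : ℝ) (Z : Tensor n r) : ℝ :=
  ⨆ e : {e // e ∈ H.E}, dualNorm n p (S.wb E₀ e) Z

/-- `W_{n,p}(BB) = min_{e ∈ E(H)} W_{n,p}(Bw(e))` for a base system. -/
noncomputable def bsW {r : ℕ} {H : RGraph r} (S : BaseSystem H)
    (E₀ : Finset (Finset H.V)) (n : ℕ) (p : ℝ) : ℝ :=
  ⨅ e : {e // e ∈ H.E}, Wnp n p (S.wb E₀ e)

/-! ### Variational problems -/

/-- The upper-tail variational problem `Φ_{n,p}(H, u)`. -/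
noncomputable def Phi {r : ℕ} (H : RGraph r) (n : ℕ) (p u : ℝ) : ℝ :=
  sInf {x : ℝ | ∃ Q ∈ wtSet n r, tR H Q ≥ (1 + u) * p ^ H.E.card ∧ x = entRate n r p Q}

/-- The lower-tail variational problem `Ψ_{n,p}(H, u)`. -/
noncomputable def Psi {r : ℕ} (H : RGraph r) (n : ℕ) (p u : ℝ) : ℝ :=
  sInf {x : ℝ | ∃ Q ∈ wtSet n r, tR H Q ≤ (1 - u) * p ^ H.E.card ∧ x = entRate n r p Q}

/-! ### The parameter Δ'(H) -/

/-- A dominating base for the edge `e` of `H`, as a collection of vertex subsets. -/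
def IsDomBase {r : ℕ} (H : RGraph r) (e : Finset H.V) (B : Finset (Finset H.V)) : Prop :=
  ∅ ∈ B ∧ (∀ b ∈ B, b ⊆ e ∧ b ≠ e) ∧
    (∀ b₁ ∈ B, ∀ b₂ ∈ B, b₁.Nonempty → b₂.Nonempty → b₁ ≠ b₂ → ¬b₁ ⊆ b₂) ∧
    ∀ e' ∈ H.E, e' ≠ e → ∃ b ∈ B, e' ∩ e ⊆ b

/-- `d'_b(e)`. -/
noncomputable def dpb {r : ℕ} (H : RGraph r) (e b : Finset H.V) : ℝ :=
  if b = ∅ then ((edeg H.E e : ℝ) + 2) / (r : ℝ)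
  else ((edeg H.E (e \ b) : ℝ) + 1) / ((e \ b).card : ℝ)

/-- `d'_B(e) = max_{b ∈ B} d'_b(e)`. -/
noncomputable def dpBase {r : ℕ} (H : RGraph r) (e : Finset H.V)
    (B : Finset (Finset H.V)) : ℝ :=
  sSup (dpb H e '' ↑B)

/-- `d'(e)`: minimum over dominating bases. -/
noncomputable def dprime {r : ℕ} (H : RGraph r) (e : Finset H.V) : ℝ :=
  sInf {x : ℝ | ∃ B, IsDomBase H e B ∧ x = dpBase H e B}

/-- `Δ'(H) = max_{e ∈ E(H)} d'(e)`. -/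
noncomputable def DeltaPrime {r : ℕ} (H : RGraph r) : ℝ :=
  sSup (dprime H '' ↑H.E)

/-! ### Cut matrices (the case r = 2) -/

/-- The cut matrix `1_I ⊗ 1_J`, as a 2-tensor. -/
noncomputable def cut2 {n : ℕ} (I J : Finset (Fin n)) : Tensor n 2 := fun x =>
  if x 0 ∈ I ∧ x 1 ∈ J then 1 else 0

/-- `‖1_I ⊗ 1_J‖_{Δ,2} = (|I| ∨ n₀)(|J| ∨ n₀)` with `n₀ = n p^{Δ-1}`. -/
noncomputable def cutNormIJ (n : ℕ) (p : ℝ) (Δ : ℕ) (I J : Finset (Fin n)) : ℝ :=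
  max (I.card : ℝ) ((n : ℝ) * p ^ (Δ - 1)) * max (J.card : ℝ) ((n : ℝ) * p ^ (Δ - 1))

/-- The dual norm `‖M‖*_{Δ,2}`. -/
noncomputable def cutDual (n : ℕ) (p : ℝ) (Δ : ℕ) (M : Tensor n 2) : ℝ :=
  ⨆ I : Finset (Fin n), ⨆ J : Finset (Fin n),
    |∑ x : Fin 2 → Fin n, M x * cut2 I J x| / cutNormIJ n p Δ I J

/-! ### The class S(G) -/

/-- `G' ∈ S(G)`: there is a surjection from `V(G)` onto `V(G')`, injective on each edge,
mapping the edge set of `G` onto that of `G'`. -/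
def InSclass {r : ℕ} (G G' : RGraph r) : Prop :=
  ∃ Ψ : G.V → G'.V, Function.Surjective Ψ ∧ (∀ e ∈ G.E, Set.InjOn Ψ ↑e) ∧
    G'.E = G.E.image fun e => e.image Ψ

/-- The maximum degree of the positive part `H₊` of a signed hypergraph. -/
def posDeg {r : ℕ} (H : RGraph r) (sgn : Finset H.V → Bool) : ℕ :=
  maxDegOn H (H.E.filter fun e => sgn e = true)

/-!
Put `X = A - p J` and run a greedy energy increment in `ℝ^{[n]²}`: while some signed cut
`T = ±1_I ⊗ 1_J` satisfies `⟨X', T⟩ > τ ‖T‖_{Δ,2}` for the current residual `X'` (`τ = εp`),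
replace `X'` by `X' - (τ/2) T`. As `⟨T, T⟩ ≤ ‖T‖_{Δ,2}`, each step lowers `⟨X', X'⟩` (initially at
most `n²`) by at least `(3/4) τ² ‖T‖_{Δ,2}`, so a maximal chain exists, and its final residual has
`‖·‖*_{Δ,2} ≤ τ`. The exceptional set consists of the graphs admitting a chain of total norm `W`
above the budget `κ n² / (ε² p²)`.

A fixed chain forces `⟨X, C⟩ ≥ (3τ/4) W + (τ/8) ⟨C, C⟩`, where `C` is the sum of its cuts with
entries clamped to `[-8/τ, 8/τ]`. Bounded entries allow the exponential moment of the centred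
Bernoulli(p) edges to be taken at `t ≍ τ log(1/p)` at a cost of only `√p t² ⟨C, C⟩`, so the chain
occurs with probability at most `exp(-c τ² log(1/p) W)`. A union bound over chains, whose entropy
is paid for by `n p^{Δ+1} ≥ C₀ log n / (ε² log(1/p))`, gives `μ_p(E⋆) ≤ p^{c₀ κ n²}`.
-/

open Real

section GreedyChain

variable {ι κ : Type*} [Fintype ι] (T : κ → ι → ℝ) (w : κ → ℝ) (τ : ℝ)

def IsGreedyChain : (ι → ℝ) → List κ → Prop
  | _, [] => True
  | X, c :: ℓ => τ * w c < X ⬝ᵥ T c ∧ IsGreedyChain (X - (τ / 2) • T c) ℓ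

variable {T w τ}

theorem dotProduct_sub_smul_self (X Y : ι → ℝ) (a : ℝ) :
    (X - a • Y) ⬝ᵥ (X - a • Y) = X ⬝ᵥ X - 2 * a * X ⬝ᵥ Y + a ^ 2 * Y ⬝ᵥ Y := by
  simp only [sub_dotProduct, dotProduct_sub, smul_dotProduct, dotProduct_smul, smul_eq_mul,
    dotProduct_comm Y X]
  ring

namespace IsGreedyChain

theorem sum_weight_le (hT : ∀ c, T c ⬝ᵥ T c ≤ w c) (hτ : 0 < τ) :
    ∀ {X : ι → ℝ} {ℓ : List κ}, IsGreedyChain T w τ X ℓ →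
      3 / 4 * τ ^ 2 * (ℓ.map w).sum ≤ X ⬝ᵥ X
  | X, [], _ => by simpa using dotProduct_self_star_nonneg X
  | X, c :: ℓ, ⟨hc, hℓ⟩ => by
    have := sum_weight_le hT hτ hℓ
    rw [dotProduct_sub_smul_self] at this
    simp only [List.map_cons, List.sum_cons]
    nlinarith [hT c, mul_lt_mul_of_pos_left hc hτ]

theorem length_le (hT : ∀ c, T c ⬝ᵥ T c ≤ w c) (hw : ∀ c, 1 ≤ w c) (hτ : 0 < τ)
    {X : ι → ℝ} {ℓ : List κ} (h : IsGreedyChain T w τ X ℓ) :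
    (ℓ.length : ℝ) ≤ 4 / (3 * τ ^ 2) * X ⬝ᵥ X := by
  have hlen : (ℓ.length : ℝ) ≤ (ℓ.map w).sum := by
    simpa using List.card_nsmul_le_sum (ℓ.map w) 1 (by simpa using fun c _ => hw c)
  rw [div_mul_eq_mul_div, le_div_iff₀ (by positivity)]
  nlinarith [h.sum_weight_le hT hτ]

theorem sum_weight_add_le_dotProduct (hT : ∀ c, T c ⬝ᵥ T c ≤ w c) (hτ : 0 ≤ τ) :
    ∀ {X : ι → ℝ} {ℓ : List κ}, IsGreedyChain T w τ X ℓ →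
      3 * τ / 4 * (ℓ.map w).sum + τ / 4 * (ℓ.map T).sum ⬝ᵥ (ℓ.map T).sum
        ≤ X ⬝ᵥ (ℓ.map T).sum
  | X, [], _ => by simp
  | X, c :: ℓ, ⟨hc, hℓ⟩ => by
    have := sum_weight_add_le_dotProduct hT hτ hℓ
    simp only [List.map_cons, List.sum_cons, add_dotProduct, dotProduct_add, sub_dotProduct,
      smul_dotProduct, smul_eq_mul, dotProduct_comm _ (T c)] at this hc ⊢
    nlinarith [mul_le_mul_of_nonneg_left (hT c) hτ]

theorem append_singleton :
    ∀ {X : ι → ℝ} {ℓ : List κ} {c : κ}, IsGreedyChain T w τ X ℓ →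
      τ * w c < (X - (τ / 2) • (ℓ.map T).sum) ⬝ᵥ T c → IsGreedyChain T w τ X (ℓ ++ [c])
  | _, [], _, _, hc => ⟨by simpa using hc, trivial⟩
  | X, c' :: ℓ, c, ⟨hc', hℓ⟩, hc => ⟨hc', append_singleton hℓ (by
      rwa [List.map_cons, List.sum_cons, smul_add, ← sub_sub] at hc)⟩

end IsGreedyChain

theorem exists_isGreedyChain_forall_le (hT : ∀ c, T c ⬝ᵥ T c ≤ w c) (hw : ∀ c, 1 ≤ w c)
    (hτ : 0 < τ) (X : ι → ℝ) :
    ∃ ℓ, IsGreedyChain T w τ X ℓ ∧ ∀ c, (X - (τ / 2) • (ℓ.map T).sum) ⬝ᵥ T c ≤ τ * w c := by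
  classical
  let P k := ∃ ℓ : List κ, IsGreedyChain T w τ X ℓ ∧ ℓ.length = k
  let K := ⌊4 / (3 * τ ^ 2) * X ⬝ᵥ X⌋₊
  have hP : ∀ k, P k → k ≤ K := by
    rintro _ ⟨ℓ, hℓ, rfl⟩
    exact Nat.le_floor (hℓ.length_le hT hw hτ)
  obtain ⟨ℓ, hℓ, hlen⟩ : P (Nat.findGreatest P K) :=
    Nat.findGreatest_spec (Nat.zero_le _) ⟨[], trivial, rfl⟩
  refine ⟨ℓ, hℓ, fun c => not_lt.1 fun hc => ?_⟩
  have hext : P (ℓ ++ [c]).length := ⟨_, hℓ.append_singleton hc, rfl⟩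
  have := Nat.le_findGreatest (hP _ hext) hext
  simp only [List.length_append, List.length_singleton] at this
  omega

end GreedyChain

section Clamp

variable {ι κ : Type*}

def clampVec (h : ℝ) (B : ι → ℝ) : ι → ℝ := fun i => max (-h) (min h (B i))

theorem abs_clampVec_le {h : ℝ} (hh : 0 ≤ h) (B : ι → ℝ) (i : ι) : |clampVec h B i| ≤ h :=
  abs_le.2 ⟨le_max_left _ _, max_le (by linarith) (min_le_left _ _)⟩

theorem mul_sub_mul_self_le_mul_clamp {h x b : ℝ} (hh : 0 < h) (hx : |x| ≤ 1) :
    h * (x * b) - b * b ≤ h * (x * max (-h) (min h b)) := by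
  obtain ⟨hx₁, hx₂⟩ := abs_le.1 hx
  rw [max_def, min_def]
  split_ifs with h₁ h₂ h₂
  · nlinarith [mul_nonneg (mul_nonneg (sub_nonneg.2 hx₂) hh.le) (sub_nonneg.2 h₁)]
  · linarith
  · nlinarith
  · nlinarith [mul_nonneg (mul_nonneg (by linarith : (0:ℝ) ≤ 1 + x) hh.le)
      (by linarith : (0:ℝ) ≤ -h - b)]

variable [Fintype ι]

theorem clampVec_dotProduct_self_le {h : ℝ} (hh : 0 ≤ h) (B : ι → ℝ) :
    clampVec h B ⬝ᵥ clampVec h B ≤ B ⬝ᵥ B := by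
  refine Finset.sum_le_sum fun i _ => ?_
  simp only [clampVec, max_def, min_def]
  split_ifs <;> nlinarith

theorem dotProduct_clampVec_ge {h : ℝ} (hh : 0 < h) {X : ι → ℝ} (hX : ∀ i, |X i| ≤ 1)
    (B : ι → ℝ) : h * X ⬝ᵥ B - B ⬝ᵥ B ≤ h * X ⬝ᵥ clampVec h B := by
  simp only [dotProduct, Finset.mul_sum, ← Finset.sum_sub_distrib]
  exact Finset.sum_le_sum fun i _ => mul_sub_mul_self_le_mul_clamp hh (hX i)

variable {T : κ → ι → ℝ} {w : κ → ℝ} {τ : ℝ}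

theorem IsGreedyChain.le_dotProduct_clampVec (hT : ∀ c, T c ⬝ᵥ T c ≤ w c) (hτ : 0 < τ)
    {X : ι → ℝ} (hX : ∀ i, |X i| ≤ 1) {ℓ : List κ} (h : IsGreedyChain T w τ X ℓ) :
    3 * τ / 4 * (ℓ.map w).sum
        + τ / 8 * clampVec (8 / τ) (ℓ.map T).sum ⬝ᵥ clampVec (8 / τ) (ℓ.map T).sum
      ≤ X ⬝ᵥ clampVec (8 / τ) (ℓ.map T).sum := by
  have h₁ := h.sum_weight_add_le_dotProduct hT hτ.le
  have h₂ := dotProduct_clampVec_ge (by positivity : 0 < 8 / τ) hX (ℓ.map T).sum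
  have h₃ := clampVec_dotProduct_self_le (by positivity : 0 ≤ 8 / τ) (ℓ.map T).sum
  have h₄ := mul_le_mul_of_nonneg_left h₂ (by positivity : 0 ≤ τ / 8)
  field_simp at h₄
  nlinarith

end Clamp

section BernoulliMGF

theorem exp_sub_one_sub_le (t : ℝ) : exp t - 1 - t ≤ t ^ 2 / 2 * exp |t| := by
  have hcont : Continuous fun v => exp v - 1 := by fun_prop
  have hint : exp t - 1 - t = ∫ v in (0 : ℝ)..t, (exp v - 1) := by
    rw [intervalIntegral.integral_sub (continuous_exp.intervalIntegrable _ _)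
      intervalIntegrable_const, integral_exp]
    simp
  rcases le_total 0 t with ht | ht
  · calc exp t - 1 - t = ∫ v in (0 : ℝ)..t, (exp v - 1) := hint
      _ ≤ ∫ v in (0 : ℝ)..t, v * exp t := by
        refine intervalIntegral.integral_mono_on ht (hcont.intervalIntegrable _ _)
          ((continuous_id.mul continuous_const).intervalIntegrable _ _) fun v hv => ?_
        have h₁ := mul_le_mul_of_nonneg_left (one_sub_le_exp_neg v) (exp_pos v).le
        rw [← exp_add, add_neg_cancel, exp_zero] at h₁
        nlinarith [mul_le_mul_of_nonneg_left (exp_le_exp.2 hv.2) hv.1]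
      _ = t ^ 2 / 2 * exp |t| := by
        rw [intervalIntegral.integral_mul_const, integral_id, abs_of_nonneg ht]
        ring
  · calc exp t - 1 - t = ∫ v in t..0, (1 - exp v) := by
          rw [hint, intervalIntegral.integral_symm, ← intervalIntegral.integral_neg]
          simp
      _ ≤ ∫ v in t..0, -v := by
        refine intervalIntegral.integral_mono_on ht
          ((continuous_const.sub continuous_exp).intervalIntegrable _ _)
          (continuous_neg.intervalIntegrable _ _) fun v _ => ?_
        linarith [add_one_le_exp v]
      _ = t ^ 2 / 2 := by
        rw [intervalIntegral.integral_neg, integral_id]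
        ring
      _ ≤ t ^ 2 / 2 * exp |t| := le_mul_of_one_le_right (by positivity) (one_le_exp (abs_nonneg t))

theorem bernoulli_mgf_le {p : ℝ} (hp₀ : 0 ≤ p) (t : ℝ) :
    p * exp ((1 - p) * t) + (1 - p) * exp (-p * t) ≤ exp (p / 2 * (t ^ 2 * exp |t|)) := by
  calc p * exp ((1 - p) * t) + (1 - p) * exp (-p * t)
      = exp (-p * t) * (p * (exp t - 1) + 1) := by
        rw [show (1 - p) * t = t + -p * t by ring, exp_add]
        ring
    _ ≤ exp (-p * t) * exp (p * (exp t - 1)) :=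
        mul_le_mul_of_nonneg_left (add_one_le_exp _) (exp_pos _).le
    _ = exp (p * (exp t - 1 - t)) := by
        rw [← exp_add]
        ring_nf
    _ ≤ exp (p / 2 * (t ^ 2 * exp |t|)) :=
        exp_le_exp.2 (by nlinarith [mul_le_mul_of_nonneg_left (exp_sub_one_sub_le t) hp₀])

theorem sum_bernoulli_mul_exp_le {E : Type*} [Fintype E] [DecidableEq E] {p : ℝ} (hp₀ : 0 ≤ p)
    (hp₁ : p ≤ 1) (a : E → ℝ) :
    ∑ ω : E → Bool, (∏ e, if ω e then p else 1 - p) *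
        exp (∑ e, ((if ω e then 1 else 0) - p) * a e)
      ≤ exp (p / 2 * ∑ e, a e ^ 2 * exp |a e|) := by
  let g : E → Bool → ℝ := fun e b =>
    (if b then p else 1 - p) * exp (((if b then 1 else 0) - p) * a e)
  calc ∑ ω : E → Bool, (∏ e, if ω e then p else 1 - p) *
        exp (∑ e, ((if ω e then 1 else 0) - p) * a e)
      = ∏ e, ∑ b, g e b := by
        rw [Fintype.prod_sum]
        refine Fintype.sum_congr _ _ fun ω => ?_
        rw [exp_sum, ← Finset.prod_mul_distrib]
    _ ≤ ∏ e, exp (p / 2 * (a e ^ 2 * exp |a e|)) := by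
        refine Finset.prod_le_prod (fun e _ => ?_) fun e _ => ?_
        · exact Finset.sum_nonneg fun b _ => by positivity
        · simpa [g, Fintype.sum_bool] using bernoulli_mgf_le hp₀ (a e)
    _ = exp (p / 2 * ∑ e, a e ^ 2 * exp |a e|) := by
        rw [← exp_sum, Finset.mul_sum]

theorem mul_exp_half_log_inv_mul_log_inv_le {p : ℝ} (hp : 0 < p) :
    p * exp (log (1 / p) / 2) * log (1 / p) ≤ 2 := by
  have hsq : p * exp (log (1 / p) / 2) * exp (log (1 / p) / 2) = 1 := by
    rw [mul_assoc, ← exp_add, add_halves, exp_log (by positivity)]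
    field_simp
  nlinarith [add_one_le_exp (log (1 / p) / 2), exp_pos (log (1 / p) / 2)]

end BernoulliMGF

section RandomGraph

variable {n r : ℕ} {p : ℝ} {Q : Tensor n r}

theorem wWeight_nonneg (hQ : ∀ x, 0 ≤ Q x ∧ Q x ≤ 1) (ω : EdgeSel n r) : 0 ≤ wWeight Q ω :=
  Finset.prod_nonneg fun I _ => by
    obtain ⟨h₀, h₁⟩ := hQ fun k => (I.1.orderIsoOfFin I.2 k).1
    simp only [setEval]
    split <;> linarith

theorem muQ_mono (hQ : ∀ x, 0 ≤ Q x ∧ Q x ≤ 1) {E F : Set (Tensor n r)} (h : E ⊆ F) :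
    muQ n r Q E ≤ muQ n r Q F :=
  Finset.sum_le_sum fun ω _ => by
    split_ifs with hE hF hF
    · exact le_rfl
    · exact absurd (h hE) hF
    · exact wWeight_nonneg hQ ω
    · exact le_rfl

theorem muP_empty : muP n r p ∅ = 0 := by
  simp [muP, muQ]

theorem muQ_biUnion_le (hQ : ∀ x, 0 ≤ Q x ∧ Q x ≤ 1) {ι : Type*} (s : Finset ι)
    (E : ι → Set (Tensor n r)) : muQ n r Q (⋃ i ∈ s, E i) ≤ ∑ i ∈ s, muQ n r Q (E i) := by
  have hnn : ∀ ω i, 0 ≤ if adjOf ω ∈ E i then wWeight Q ω else 0 := fun ω i => by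
    split
    · exact wWeight_nonneg hQ ω
    · exact le_rfl
  calc muQ n r Q (⋃ i ∈ s, E i)
      ≤ ∑ ω : EdgeSel n r, ∑ i ∈ s, if adjOf ω ∈ E i then wWeight Q ω else 0 := by
        refine Finset.sum_le_sum fun ω _ => ?_
        split_ifs with h
        · obtain ⟨i, hi, hω⟩ := Set.mem_iUnion₂.1 h
          simpa [hω] using Finset.single_le_sum (fun j _ => hnn ω j) hi
        · exact Finset.sum_nonneg fun i _ => hnn ω i
    _ = ∑ i ∈ s, muQ n r Q (E i) := Finset.sum_comm

theorem muQ_le_exp_mul_expQ (hQ : ∀ x, 0 ≤ Q x ∧ Q x ≤ 1) (f : Tensor n r → ℝ) {t : ℝ}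
    (ht : 0 ≤ t) (u : ℝ) :
    muQ n r Q {A | u ≤ f A} ≤ exp (-(t * u)) * expQ n r Q fun A => exp (t * f A) := by
  rw [expQ, Finset.mul_sum]
  refine Finset.sum_le_sum fun ω _ => ?_
  have hw := wWeight_nonneg hQ ω
  rw [mul_left_comm, ← exp_add]
  split_ifs with h
  · exact le_mul_of_one_le_right hw (one_le_exp (by nlinarith [h.out]))
  · positivity

def edgeFiber (e : Idx n r) : Finset (Fin r → Fin n) :=
  Finset.univ.filter fun x => Function.Injective x ∧ Finset.univ.image x = e.1

theorem sum_sum_edgeFiber (F : (Fin r → Fin n) → ℝ) :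
    ∑ e : Idx n r, ∑ x ∈ edgeFiber e, F x = ∑ x with Function.Injective x, F x := by
  have hmaps : ∀ x : Fin r → Fin n, x ∈ Finset.univ.filter Function.Injective →
      Finset.univ.image x ∈ Finset.univ.filter fun s : Finset (Fin n) => s.card = r :=
    fun x hx => by simp [Finset.card_image_of_injective _ (Finset.mem_filter.1 hx).2]
  rw [← Finset.sum_fiberwise_of_maps_to hmaps,
    Finset.sum_subtype (p := fun s : Finset (Fin n) => s.card = r) (F := inferInstance) _
      fun s => by simp]
  simp only [edgeFiber, Finset.filter_filter]

theorem adjOf_sub_smul_Jten_dotProduct (ω : EdgeSel n r) (C : Tensor n r) :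
    (adjOf ω - p • Jten n r) ⬝ᵥ C
      = ∑ e, ((if ω e then 1 else 0) - p) * ∑ x ∈ edgeFiber e, C x := by
  have hfib : ∀ e, ∀ x ∈ edgeFiber e,
      (adjOf ω - p • Jten n r) x = (if ω e then 1 else 0) - p := by
    intro e x hx
    obtain ⟨hinj, himg⟩ := (Finset.mem_filter.1 hx).2
    simp only [Pi.sub_apply, Pi.smul_apply, smul_eq_mul, adjOf, Jten, dif_pos hinj,
      if_pos hinj, mul_one]
    have he : ∀ h', ω ⟨Finset.univ.image x, h'⟩ = ω e := fun _ => congrArg ω (Subtype.ext himg)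
    simp only [he]
  simp_rw [Finset.mul_sum]
  rw [Finset.sum_congr rfl fun e _ => Finset.sum_congr rfl fun x hx => by rw [← hfib e x hx],
    sum_sum_edgeFiber, dotProduct, Finset.sum_filter]
  refine Finset.sum_congr rfl fun x _ => ?_
  split_ifs with hinj
  · rfl
  · simp [adjOf, Jten, hinj]

theorem card_edgeFiber_le_two (e : Idx n 2) : (edgeFiber e).card ≤ 2 := by
  refine (Finset.card_le_card_of_injOn (fun x : Fin 2 → Fin n => x 0) (fun x hx => ?_)
    fun x hx y hy h => ?_).trans e.2.le
  · obtain ⟨-, himg⟩ := (Finset.mem_filter.1 hx).2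
    simp [← himg]
  · obtain ⟨hx, hxe⟩ := (Finset.mem_filter.1 hx).2
    obtain ⟨hy, hye⟩ := (Finset.mem_filter.1 hy).2
    have hmem : x 1 ∈ Finset.univ.image y := by rw [hye, ← hxe]; simp
    obtain ⟨k, -, hk⟩ := Finset.mem_image.1 hmem
    have h01 : x 1 = y 1 := by
      fin_cases k
      · exact absurd (hk.symm.trans h.symm) (hx.ne (by decide))
      · exact hk.symm
    funext i
    fin_cases i
    · exact h
    · exact h01

theorem abs_sum_edgeFiber_le {C : Tensor n 2} {h : ℝ} (hh : 0 ≤ h) (hC : ∀ x, |C x| ≤ h)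
    (e : Idx n 2) : |∑ x ∈ edgeFiber e, C x| ≤ 2 * h :=
  calc |∑ x ∈ edgeFiber e, C x| ≤ (edgeFiber e).card • h :=
        (Finset.abs_sum_le_sum_abs _ _).trans (Finset.sum_le_card_nsmul _ _ h fun x _ => hC x)
    _ ≤ 2 * h := by
        rw [nsmul_eq_mul]
        exact mul_le_mul_of_nonneg_right (by exact_mod_cast card_edgeFiber_le_two e) hh

theorem sum_sq_sum_edgeFiber_le (C : Tensor n 2) :
    ∑ e, (∑ x ∈ edgeFiber e, C x) ^ 2 ≤ 2 * C ⬝ᵥ C :=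
  calc ∑ e, (∑ x ∈ edgeFiber e, C x) ^ 2 ≤ ∑ e, 2 * ∑ x ∈ edgeFiber e, C x ^ 2 :=
        Finset.sum_le_sum fun e _ => sq_sum_le_card_mul_sum_sq.trans <|
          mul_le_mul_of_nonneg_right (by exact_mod_cast card_edgeFiber_le_two e)
            (Finset.sum_nonneg fun _ _ => sq_nonneg _)
    _ = 2 * ∑ x with Function.Injective x, C x ^ 2 := by
        rw [← Finset.mul_sum, sum_sum_edgeFiber]
    _ ≤ 2 * C ⬝ᵥ C := by
        refine mul_le_mul_of_nonneg_left ?_ zero_le_two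
        simpa only [dotProduct, sq] using Finset.sum_le_sum_of_subset_of_nonneg
          (Finset.filter_subset _ _) fun x _ _ => mul_self_nonneg (C x)

theorem expQ_exp_mul_dotProduct_le (hp₀ : 0 ≤ p) (hp₁ : p ≤ 1)
    {C : Tensor n 2} {h : ℝ} (hh : 0 ≤ h) (hC : ∀ x, |C x| ≤ h) {t : ℝ} (ht : 0 ≤ t) :
    expQ n 2 (fun _ => p) (fun A => exp (t * (A - p • Jten n 2) ⬝ᵥ C))
      ≤ exp (p * exp (2 * t * h) * t ^ 2 * C ⬝ᵥ C) := by
  let a : Idx n 2 → ℝ := fun e => t * ∑ x ∈ edgeFiber e, C x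
  have ha : ∀ e, |a e| ≤ 2 * t * h := fun e => by
    rw [abs_mul, abs_of_nonneg ht, mul_comm 2 t, mul_assoc]
    exact mul_le_mul_of_nonneg_left (abs_sum_edgeFiber_le hh hC e) ht
  calc expQ n 2 (fun _ => p) (fun A => exp (t * (A - p • Jten n 2) ⬝ᵥ C))
      = ∑ ω : EdgeSel n 2, (∏ e, if ω e then p else 1 - p) *
          exp (∑ e, ((if ω e then 1 else 0) - p) * a e) := by
        refine Finset.sum_congr rfl fun ω _ => ?_
        dsimp only
        rw [adjOf_sub_smul_Jten_dotProduct, Finset.mul_sum]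
        exact congrArg₂ (· * ·) rfl (congrArg exp (Finset.sum_congr rfl fun e _ => by ring))
    _ ≤ exp (p / 2 * ∑ e, a e ^ 2 * exp |a e|) := sum_bernoulli_mul_exp_le hp₀ hp₁ a
    _ ≤ exp (p / 2 * ∑ e, a e ^ 2 * exp (2 * t * h)) := by
        gcongr with e
        exact ha e
    _ ≤ exp (p * exp (2 * t * h) * t ^ 2 * C ⬝ᵥ C) := by
        have := mul_le_mul_of_nonneg_left (sum_sq_sum_edgeFiber_le C)
          (by positivity : 0 ≤ p / 2 * t ^ 2 * exp (2 * t * h))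
        simp only [a, mul_pow, ← Finset.sum_mul, ← Finset.mul_sum]
        exact exp_le_exp.2 (by linarith)

theorem abs_sub_smul_Jten_le_one {A : Tensor n r} (hA : A ∈ adjSet n r) (hp₀ : 0 ≤ p)
    (hp₁ : p ≤ 1) (x : Fin r → Fin n) : |(A - p • Jten n r) x| ≤ 1 := by
  simp only [Pi.sub_apply, Pi.smul_apply, smul_eq_mul, Jten]
  rcases hA.2.1 x with h | h <;> split_ifs <;> simp only [h, abs_le] <;> constructor <;> linarith

theorem sub_smul_Jten_dotProduct_self_le {A : Tensor n r} (hA : A ∈ adjSet n r) (hp₀ : 0 ≤ p)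
    (hp₁ : p ≤ 1) : (A - p • Jten n r) ⬝ᵥ (A - p • Jten n r) ≤ (n : ℝ) ^ r := by
  calc (A - p • Jten n r) ⬝ᵥ (A - p • Jten n r) ≤ ∑ _x : Fin r → Fin n, (1 : ℝ) :=
        Finset.sum_le_sum fun x _ => by
          have := abs_sub_smul_Jten_le_one hA hp₀ hp₁ x
          nlinarith [abs_nonneg ((A - p • Jten n r) x), sq_abs ((A - p • Jten n r) x)]
    _ = (n : ℝ) ^ r := by simp

theorem sub_smul_Jten_eq_zero_of_lt {A : Tensor n r} (hA : A ∈ adjSet n r) (hn : n < r) :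
    A - p • Jten n r = 0 := by
  funext x
  have hx : ¬Function.Injective x := fun h => by
    have := Fintype.card_le_of_injective x h
    simp only [Fintype.card_fin] at this
    omega
  simp [hA.2.2 x hx, Jten, hx]

end RandomGraph

section Cuts

variable {n : ℕ}

theorem cut2_dotProduct_self (I J : Finset (Fin n)) :
    cut2 I J ⬝ᵥ cut2 I J = (I.card * J.card : ℝ) := by
  have h : ∀ x, cut2 I J x * cut2 I J x = if x ∈ Fintype.piFinset ![I, J] then 1 else 0 :=
    fun x => by simp [cut2, Fin.forall_fin_two]
  simp only [dotProduct, h, Finset.sum_boole, Finset.filter_mem_eq_inter, Finset.univ_inter,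
    Fintype.card_piFinset]
  simp

theorem card_mul_card_le_cutNormIJ (p : ℝ) (Δ : ℕ) (I J : Finset (Fin n)) :
    (I.card * J.card : ℝ) ≤ cutNormIJ n p Δ I J :=
  mul_le_mul (le_max_left _ _) (le_max_left _ _) (Nat.cast_nonneg _)
    ((Nat.cast_nonneg _).trans (le_max_left _ _))

theorem mul_card_add_card_le_cutNormIJ {p : ℝ} {Δ : ℕ} (hN : 0 ≤ (n : ℝ) * p ^ (Δ - 1))
    (I J : Finset (Fin n)) :
    (n : ℝ) * p ^ (Δ - 1) * (I.card + J.card) / 2 ≤ cutNormIJ n p Δ I J := by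
  have h₁ : (I.card : ℝ) * (n * p ^ (Δ - 1)) ≤ cutNormIJ n p Δ I J :=
    mul_le_mul (le_max_left _ _) (le_max_right _ _) hN ((Nat.cast_nonneg _).trans (le_max_left _ _))
  have h₂ : (n * p ^ (Δ - 1)) * (J.card : ℝ) ≤ cutNormIJ n p Δ I J :=
    mul_le_mul (le_max_right _ _) (le_max_left _ _) (Nat.cast_nonneg _)
      ((Nat.cast_nonneg _).trans (le_max_left _ _))
  linarith

abbrev SignedCut (n : ℕ) :=
  Bool × {I : Finset (Fin n) // I.Nonempty} × {J : Finset (Fin n) // J.Nonempty}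

namespace SignedCut

def sign (c : SignedCut n) : ℝ := if c.1 then 1 else -1

noncomputable def tensor (c : SignedCut n) : Tensor n 2 := c.sign • cut2 c.2.1.1 c.2.2.1

noncomputable def weight (p : ℝ) (Δ : ℕ) (c : SignedCut n) : ℝ := cutNormIJ n p Δ c.2.1 c.2.2

theorem sign_mul_self (c : SignedCut n) : c.sign * c.sign = 1 := by
  unfold sign
  split <;> norm_num

theorem tensor_dotProduct_self_le (p : ℝ) (Δ : ℕ) (c : SignedCut n) :
    c.tensor ⬝ᵥ c.tensor ≤ c.weight p Δ := by
  rw [tensor, smul_dotProduct, dotProduct_smul, smul_eq_mul, smul_eq_mul, ← mul_assoc,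
    sign_mul_self, one_mul, cut2_dotProduct_self]
  exact card_mul_card_le_cutNormIJ p Δ _ _

theorem one_le_weight (p : ℝ) (Δ : ℕ) (c : SignedCut n) : 1 ≤ c.weight p Δ := by
  have hI : (1 : ℝ) ≤ c.2.1.1.card := by exact_mod_cast c.2.1.2.card_pos
  have hJ : (1 : ℝ) ≤ c.2.2.1.card := by exact_mod_cast c.2.2.2.card_pos
  exact (one_le_mul_of_one_le_of_one_le hI hJ).trans (card_mul_card_le_cutNormIJ p Δ _ _)

end SignedCut

theorem cutDual_le_of_forall_signedCut {p : ℝ} {Δ : ℕ} {M : Tensor n 2} {ε : ℝ} (hε : 0 ≤ ε)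
    (h : ∀ c : SignedCut n, M ⬝ᵥ c.tensor ≤ ε * c.weight p Δ) : cutDual n p Δ M ≤ ε := by
  refine ciSup_le fun I => ciSup_le fun J => ?_
  change |M ⬝ᵥ cut2 I J| / cutNormIJ n p Δ I J ≤ ε
  rcases I.eq_empty_or_nonempty with rfl | hI
  · simp [dotProduct, cut2, hε]
  rcases J.eq_empty_or_nonempty with rfl | hJ
  · simp [dotProduct, cut2, hε]
  have hw := SignedCut.one_le_weight p Δ (true, ⟨I, hI⟩, ⟨J, hJ⟩)
  have hpos := h (true, ⟨I, hI⟩, ⟨J, hJ⟩)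
  have hneg := h (false, ⟨I, hI⟩, ⟨J, hJ⟩)
  simp only [SignedCut.tensor, SignedCut.sign, SignedCut.weight, dotProduct_smul, smul_eq_mul,
    if_true, if_false, Bool.false_eq_true] at hpos hneg hw
  rw [div_le_iff₀ (by linarith), abs_le]
  constructor <;> linarith

theorem sum_pow_card_subtype_nonempty_le {α : Type*} [Fintype α] [DecidableEq α] {x : ℝ}
    (hx : 0 ≤ x) (h : Fintype.card α * x ≤ 1) :
    ∑ I : {I : Finset α // I.Nonempty}, x ^ I.1.card ≤ 2 * Fintype.card α * x := by
  have hsum : ∑ I : Finset α, x ^ I.card = (x + 1) ^ Fintype.card α := by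
    simpa using Fintype.sum_pow_mul_eq_add_pow α x 1
  have hexp : (x + 1) ^ Fintype.card α ≤ exp (Fintype.card α * x) := by
    rw [exp_nat_mul]
    exact pow_le_pow_left₀ (by linarith) (by linarith [add_one_le_exp x]) _
  have h₁ := abs_le.1 (abs_exp_sub_one_le (x := Fintype.card α * x)
    (by rw [abs_of_nonneg (by positivity)]; exact h))
  rw [← (Finset.sum_subtype (Finset.univ.erase ∅) (fun I => by
    simp [Finset.nonempty_iff_ne_empty]) fun I : Finset α => x ^ I.card), Finset.sum_erase_eq_sub
    (Finset.mem_univ _), hsum]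
  rw [abs_of_nonneg (by positivity)] at h₁
  simp only [Finset.card_empty, pow_zero]
  linarith

theorem sum_exp_neg_mul_weight_le {p γ : ℝ} {Δ : ℕ} (hn : 2 ≤ n) (hγ : 0 ≤ γ)
    (hN : 0 ≤ (n : ℝ) * p ^ (Δ - 1)) (h : 3 * log n ≤ γ * (n * p ^ (Δ - 1)) / 2) :
    ∑ c : SignedCut n, exp (-(γ * c.weight p Δ)) ≤ 1 / 2 := by
  set x := exp (-(γ * (n * p ^ (Δ - 1)) / 2))
  have hn' : (2 : ℝ) ≤ n := by exact_mod_cast hn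
  have hnx : 4 * n * x ≤ 1 :=
    calc 4 * n * x ≤ 4 * n * exp (-(3 * log n)) :=
          mul_le_mul_of_nonneg_left (exp_le_exp.2 (by linarith)) (by positivity)
      _ = 4 / n ^ 2 := by
        rw [exp_neg, show (3 : ℝ) * log n = log (n ^ 3) by rw [log_pow]; norm_num,
          exp_log (by positivity)]
        field_simp
      _ ≤ 1 := by rw [div_le_one (by positivity)]; nlinarith
  set S := ∑ I : {I : Finset (Fin n) // I.Nonempty}, x ^ I.1.card
  have hx : 0 ≤ x := (exp_pos _).le
  have hS₀ : 0 ≤ S := Finset.sum_nonneg fun _ _ => pow_nonneg hx _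
  have hS : S ≤ 2 * n * x := by
    simpa using sum_pow_card_subtype_nonempty_le hx (α := Fin n) (by simp; linarith)
  calc ∑ c : SignedCut n, exp (-(γ * c.weight p Δ))
      ≤ ∑ c : SignedCut n, x ^ c.2.1.1.card * x ^ c.2.2.1.card := by
        refine Finset.sum_le_sum fun c _ => ?_
        rw [← exp_nat_mul, ← exp_nat_mul, ← exp_add]
        refine exp_le_exp.2 ?_
        have := mul_le_mul_of_nonneg_left (mul_card_add_card_le_cutNormIJ hN c.2.1.1 c.2.2.1) hγ
        simp only [SignedCut.weight]
        linarith
    _ = 2 * (S * S) := by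
        simp only [Fintype.sum_prod_type, Fintype.sum_bool, Finset.sum_mul_sum, S]
        ring
    _ ≤ 1 / 2 := by nlinarith

end Cuts

section Exceptional

variable {n : ℕ} {p : ℝ} {Δ : ℕ} {τ bud : ℝ}

def chainEvent (n : ℕ) (p : ℝ) (Δ : ℕ) (τ bud : ℝ) (ℓ : List (SignedCut n)) :
    Set (Tensor n 2) :=
  {A | A ∈ adjSet n 2 ∧
    IsGreedyChain SignedCut.tensor (SignedCut.weight p Δ) τ (A - p • Jten n 2) ℓ ∧
      bud < (ℓ.map (SignedCut.weight p Δ)).sum}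

def exceptionalSet (n : ℕ) (p : ℝ) (Δ : ℕ) (τ bud : ℝ) : Set (Tensor n 2) :=
  ⋃ ℓ, chainEvent n p Δ τ bud ℓ

theorem exceptionalSet_subset_adjSet : exceptionalSet n p Δ τ bud ⊆ adjSet n 2 :=
  Set.iUnion_subset fun _ _ hA => hA.1

theorem muP_chainEvent_le (hp₀ : 0 < p) (hp₁ : p < 1) (hτ : 0 < τ) (ℓ : List (SignedCut n)) :
    muP n 2 p (chainEvent n p Δ τ bud ℓ)
      ≤ exp (-(3 * τ ^ 2 * log (1 / p) / 128 * (ℓ.map (SignedCut.weight p Δ)).sum)) := by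
  have hQ : ∀ x : Fin 2 → Fin n, 0 ≤ p ∧ p ≤ 1 := fun _ => ⟨hp₀.le, hp₁.le⟩
  set L := log (1 / p)
  have hL : 0 ≤ L := log_nonneg (by rw [le_div_iff₀ hp₀]; linarith)
  set W := (ℓ.map (SignedCut.weight p Δ)).sum
  set C := clampVec (8 / τ) (ℓ.map SignedCut.tensor).sum
  set t := τ * L / 32
  have ht : 0 ≤ t := by positivity
  have hC : ∀ x, |C x| ≤ 8 / τ := abs_clampVec_le (by positivity) _
  have hCC : 0 ≤ C ⬝ᵥ C := by simpa using dotProduct_self_star_nonneg C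
  have hpsL := mul_exp_half_log_inv_mul_log_inv_le hp₀
  -- the choice of `t` makes `exp (2 * t * (8 / τ)) = p ^ (-1/2)`
  have h2t : 2 * t * (8 / τ) = L / 2 := by field_simp; ring
  calc muP n 2 p (chainEvent n p Δ τ bud ℓ)
      ≤ muP n 2 p {A | 3 * τ / 4 * W + τ / 8 * C ⬝ᵥ C ≤ (A - p • Jten n 2) ⬝ᵥ C} :=
        muQ_mono hQ fun A ⟨hA, hch, _⟩ => hch.le_dotProduct_clampVec
          (SignedCut.tensor_dotProduct_self_le p Δ) hτ
          (abs_sub_smul_Jten_le_one hA hp₀.le hp₁.le)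
    _ ≤ exp (-(t * (3 * τ / 4 * W + τ / 8 * C ⬝ᵥ C))) *
          exp (p * exp (2 * t * (8 / τ)) * t ^ 2 * C ⬝ᵥ C) := by
        refine (muQ_le_exp_mul_expQ hQ _ ht _).trans ?_
        gcongr
        exact expQ_exp_mul_dotProduct_le hp₀.le hp₁.le (by positivity) hC ht
    _ ≤ exp (-(3 * τ ^ 2 * L / 128 * W)) := by
        rw [← exp_add, h2t]
        refine exp_le_exp.2 ?_
        have : p * exp (L / 2) * t ≤ τ / 8 := by
          simp only [t]
          nlinarith
        have hW : t * (3 * τ / 4 * W) = 3 * τ ^ 2 * L / 128 * W := by simp only [t]; ring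
        nlinarith [mul_le_mul_of_nonneg_right this (mul_nonneg ht hCC)]

theorem IsGreedyChain.length_le_of_mem_adjSet (hp₀ : 0 ≤ p) (hp₁ : p ≤ 1) (hτ : 0 < τ)
    {A : Tensor n 2} (hA : A ∈ adjSet n 2) {ℓ : List (SignedCut n)}
    (h : IsGreedyChain SignedCut.tensor (SignedCut.weight p Δ) τ (A - p • Jten n 2) ℓ) :
    ℓ.length ≤ ⌊4 / (3 * τ ^ 2) * (n : ℝ) ^ 2⌋₊ :=
  Nat.le_floor <| (h.length_le (SignedCut.tensor_dotProduct_self_le p Δ)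
    (SignedCut.one_le_weight p Δ) hτ).trans <|
      mul_le_mul_of_nonneg_left (sub_smul_Jten_dotProduct_self_le hA hp₀ hp₁) (by positivity)

theorem exceptionalSet_subset_biUnion (hp₀ : 0 ≤ p) (hp₁ : p ≤ 1) (hτ : 0 < τ)
    (hbud : 0 ≤ bud) :
    exceptionalSet n p Δ τ bud ⊆ ⋃ k ∈ Finset.Icc 1 ⌊4 / (3 * τ ^ 2) * (n : ℝ) ^ 2⌋₊,
      ⋃ v ∈ (Finset.univ : Finset (Fin k → SignedCut n)),
        chainEvent n p Δ τ bud (List.ofFn v) := by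
  intro A hA
  obtain ⟨ℓ, hA, hch, hbudℓ⟩ := Set.mem_iUnion.1 hA
  have hne : ℓ ≠ [] := by
    rintro rfl
    simp only [List.map_nil, List.sum_nil] at hbudℓ
    linarith
  refine Set.mem_biUnion (x := ℓ.length) ?_ (Set.mem_biUnion (x := ℓ.get) (Finset.mem_univ _) ?_)
  · exact Finset.mem_Icc.2 ⟨List.length_pos_iff.2 hne, hch.length_le_of_mem_adjSet hp₀ hp₁ hτ hA⟩
  · rw [List.ofFn_get]
    exact ⟨hA, hch, hbudℓ⟩

theorem muP_chainEvent_ofFn_le (hp₀ : 0 < p) (hp₁ : p < 1) (hτ : 0 < τ) {k : ℕ}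
    (v : Fin k → SignedCut n) :
    muP n 2 p (chainEvent n p Δ τ bud (List.ofFn v))
      ≤ exp (-(3 * τ ^ 2 * log (1 / p) / 256 * bud)) *
          ∏ i, exp (-(3 * τ ^ 2 * log (1 / p) / 256 * (v i).weight p Δ)) := by
  set γ := 3 * τ ^ 2 * log (1 / p) / 256
  have hγ : 0 ≤ γ := by
    have := log_nonneg (by rw [le_div_iff₀ hp₀]; linarith : (1 : ℝ) ≤ 1 / p)
    positivity
  have hW : ((List.ofFn v).map (SignedCut.weight p Δ)).sum = ∑ i, (v i).weight p Δ := by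
    rw [List.map_ofFn, List.sum_ofFn]
    rfl
  by_cases hbud : bud < ∑ i, (v i).weight p Δ
  · refine (muP_chainEvent_le hp₀ hp₁ hτ _).trans ?_
    rw [← exp_sum, ← exp_add, hW, Finset.sum_neg_distrib, ← Finset.mul_sum]
    refine exp_le_exp.2 ?_
    rw [show 3 * τ ^ 2 * log (1 / p) / 128 = 2 * γ by simp only [γ]; ring]
    nlinarith [mul_le_mul_of_nonneg_left hbud.le hγ]
  · have hempty : chainEvent n p Δ τ bud (List.ofFn v) = ∅ :=
      Set.eq_empty_of_forall_notMem fun A hA => hbud (hW ▸ hA.2.2)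
    rw [hempty, muP_empty]
    positivity

theorem muP_exceptionalSet_le (hp₀ : 0 < p) (hp₁ : p < 1) (hτ : 0 < τ) (hbud : 0 ≤ bud)
    (hsum : ∑ c : SignedCut n, exp (-(3 * τ ^ 2 * log (1 / p) / 256 * c.weight p Δ)) ≤ 1 / 2) :
    muP n 2 p (exceptionalSet n p Δ τ bud) ≤ exp (-(3 * τ ^ 2 * log (1 / p) / 256 * bud)) := by
  have hQ : ∀ x : Fin 2 → Fin n, 0 ≤ p ∧ p ≤ 1 := fun _ => ⟨hp₀.le, hp₁.le⟩
  set γ := 3 * τ ^ 2 * log (1 / p) / 256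
  set K := ⌊4 / (3 * τ ^ 2) * (n : ℝ) ^ 2⌋₊
  have hgeom : ∑ k ∈ Finset.Icc 1 K, (1 / 2 : ℝ) ^ k ≤ 1 := by
    have := geom_sum_Ico_le_of_lt_one (m := 1) (n := K + 1) (x := (1 / 2 : ℝ)) (by norm_num)
      (by norm_num)
    rw [Finset.Ico_add_one_right_eq_Icc] at this
    norm_num at this ⊢
    exact this
  calc muP n 2 p (exceptionalSet n p Δ τ bud)
      ≤ ∑ k ∈ Finset.Icc 1 K, ∑ v : Fin k → SignedCut n,
          muP n 2 p (chainEvent n p Δ τ bud (List.ofFn v)) :=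
        (muQ_mono hQ (exceptionalSet_subset_biUnion hp₀.le hp₁.le hτ hbud)).trans <|
          (muQ_biUnion_le hQ _ _).trans <| Finset.sum_le_sum fun k _ => muQ_biUnion_le hQ _ _
    _ ≤ ∑ k ∈ Finset.Icc 1 K, ∑ v : Fin k → SignedCut n,
          exp (-(γ * bud)) * ∏ i, exp (-(γ * (v i).weight p Δ)) :=
        Finset.sum_le_sum fun k _ => Finset.sum_le_sum fun v _ =>
          muP_chainEvent_ofFn_le hp₀ hp₁ hτ v
    _ = exp (-(γ * bud)) * ∑ k ∈ Finset.Icc 1 K,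
          (∑ c : SignedCut n, exp (-(γ * c.weight p Δ))) ^ k := by
        simp only [← Finset.mul_sum, Fintype.sum_pow]
    _ ≤ exp (-(γ * bud)) * ∑ k ∈ Finset.Icc 1 K, (1 / 2 : ℝ) ^ k := by
        gcongr
    _ ≤ exp (-(γ * bud)) := mul_le_of_le_one_right (exp_pos _).le hgeom

theorem exceptionalSet_eq_empty_of_lt_two (hn : n < 2) (hτ : 0 ≤ τ) (hbud : 0 ≤ bud) :
    exceptionalSet n p Δ τ bud = ∅ := by
  refine Set.eq_empty_of_forall_notMem fun A hA => ?_
  obtain ⟨ℓ, hA, hch, hbudℓ⟩ := Set.mem_iUnion.1 hA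
  rw [sub_smul_Jten_eq_zero_of_lt hA hn] at hch
  cases ℓ with
  | nil => simp at hbudℓ; linarith
  | cons c ℓ =>
    have := mul_nonneg hτ (zero_le_one.trans (SignedCut.one_le_weight p Δ c))
    simp only [IsGreedyChain, zero_dotProduct] at hch
    linarith [hch.1]

theorem exists_decomposition_of_notMem_exceptionalSet (hτ : 0 < τ) {A : Tensor n 2}
    (hA : A ∈ adjSet n 2) (hAE : A ∉ exceptionalSet n p Δ τ bud) :
    ∃ (k : ℕ) (α : Fin k → ℝ) (I J : Fin k → Finset (Fin n)) (Arand : Tensor n 2),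
      A = (fun x => p * Jten n 2 x + (∑ i, α i * cut2 (I i) (J i) x) + Arand x) ∧
      (∑ i, cutNormIJ n p Δ (I i) (J i)) ≤ bud ∧ cutDual n p Δ Arand ≤ τ := by
  obtain ⟨ℓ, hch, hmax⟩ := exists_isGreedyChain_forall_le
    (SignedCut.tensor_dotProduct_self_le p Δ) (SignedCut.one_le_weight p Δ) hτ
    (A - p • Jten n 2)
  refine ⟨ℓ.length, fun i => τ / 2 * ℓ[(i : ℕ)].sign, fun i => ℓ[(i : ℕ)].2.1,
    fun i => ℓ[(i : ℕ)].2.2,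
    A - p • Jten n 2 - (τ / 2) • (ℓ.map SignedCut.tensor).sum, ?_, ?_,
    cutDual_le_of_forall_signedCut hτ.le hmax⟩
  · funext x
    rw [← Fin.sum_univ_fun_getElem]
    simp only [Pi.sub_apply, Pi.smul_apply, Finset.sum_apply, SignedCut.tensor, smul_eq_mul,
      Finset.mul_sum, mul_assoc]
    ring
  · refine not_lt.1 fun h => hAE (Set.mem_iUnion.2 ⟨ℓ, hA, hch, ?_⟩)
    rwa [← Fin.sum_univ_fun_getElem]

end Exceptional

theorem statement0 :
    ∃ C₀ c₀ : ℝ, 0 < C₀ ∧ 0 < c₀ ∧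
      ∀ Δ : ℕ, 1 ≤ Δ → ∀ κ ε : ℝ, 0 < κ → 0 < ε → ∀ n : ℕ, 1 ≤ n →
      ∀ p : ℝ, (n : ℝ) ^ (-2 : ℝ) < p → p < 1 →
      (n : ℝ) * p ^ (Δ + 1) ≥ C₀ * Real.log n / (ε ^ 2 * Real.log (1 / p)) →
      ∃ Estar : Set (Tensor n 2), Estar ⊆ adjSet n 2 ∧
        muP n 2 p Estar ≤ p ^ (c₀ * κ * (n : ℝ) ^ 2) ∧
        ∀ A ∈ adjSet n 2, A ∉ Estar →
          ∃ (k : ℕ) (α : Fin k → ℝ) (I J : Fin k → Finset (Fin n)) (Arand : Tensor n 2),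
            A = (fun x => p * Jten n 2 x + (∑ i, α i * cut2 (I i) (J i) x) + Arand x) ∧
            (∑ i, cutNormIJ n p Δ (I i) (J i)) ≤ κ / (ε ^ 2 * p ^ 2) * (n : ℝ) ^ 2 ∧
            cutDual n p Δ Arand ≤ ε * p := by
  refine ⟨512, 3 / 256, by norm_num, by norm_num, ?_⟩
  intro Δ hΔ κ ε hκ hε n hn p hpn hp₁ hmain
  have hp₀ : 0 < p := (rpow_pos_of_pos (by exact_mod_cast hn) _).trans hpn
  have hL : 0 < log (1 / p) := log_pos (by rw [lt_div_iff₀ hp₀]; linarith)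
  set bud := κ / (ε ^ 2 * p ^ 2) * (n : ℝ) ^ 2
  refine ⟨exceptionalSet n p Δ (ε * p) bud, exceptionalSet_subset_adjSet, ?_,
    fun A hA hAE => exists_decomposition_of_notMem_exceptionalSet (by positivity) hA hAE⟩
  rcases lt_or_ge n 2 with hn₂ | hn₂
  · rw [exceptionalSet_eq_empty_of_lt_two hn₂ (by positivity) (by positivity), muP_empty]
    positivity
  have hbound : p ^ (3 / 256 * κ * (n : ℝ) ^ 2)
      = exp (-(3 * (ε * p) ^ 2 * log (1 / p) / 256 * bud)) := by
    rw [rpow_def_of_pos hp₀, one_div, log_inv]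
    congr 1
    simp only [bud]
    field_simp
  rw [hbound]
  refine muP_exceptionalSet_le hp₀ hp₁ (by positivity) (by positivity)
    (sum_exp_neg_mul_weight_le hn₂ (by positivity) (by positivity) ?_)
  have hpow : (n : ℝ) * p ^ (Δ + 1) = n * p ^ (Δ - 1) * p ^ 2 := by
    rw [mul_assoc, ← pow_add, show Δ - 1 + 2 = Δ + 1 by omega]
  rw [ge_iff_le, div_le_iff₀ (by positivity), hpow] at hmain
  nlinarith
end

section
/- Let p ∈ (0,1), let H be an r-graph, let 𝔅 = {𝖡(e)}_{e∈E(H)} be an H-dominating base system with standard weights, and let ‖·‖*_𝔅 be the associated seminorm. Let C ⊆ A_{n,r} be a set of diameter at most ε p under ‖·‖*_𝔅 for some ε ∈ (0,1], and assume there exist Q₀ ∈ conv(C) and L ≥ 1 such that t_p(H', Q₀) ≤ L for every proper subgraph H' ⊊ H. Then there is a constant C(H), depending only on H, such that for all collections P = (P^e)_{e∈E(H)} and Q = (Q^e)_{e∈E(H)} with every P^e, Q^e ∈ conv(C): |t_p(H, P) − t_p(H, Q)| ≤ C(H) L ε, where t_p(H, S) = (n^{v(H)} p^{e(H)})^{−1}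 Σ_{φ : V(H) → [n]} Π_{e∈E(H)} S^e(φ(e)) for a collection S = (S^e)_{e∈E(H)} of tensors in Q_{n,r} (with S^e(φ(e)) taken to be 0 if φ is not injective on e). -/
open scoped Classical
open Finset

open Function (update update_self update_of_ne update_comm)

/-! Replace the tensors on the edges of `H` one at a time. Swapping the tensor on the edge `e`
changes the count by `∑_φ (P^e - Q^e)(φ(e)) ∏_{e' ≠ e} S^{e'}(φ(e'))`. When the other tensors are
Boolean, for each labelling `ψ` of the vertices off `e` this is the pairing of `P^e - Q^e` with a
test tensor of the base `B(e)` (domination makes its factors over `b ∈ B(e)` reproduce the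
product), hence at most `εp` times that tensor's norm. Summed over `ψ`, these norms are counts of
proper subgraphs weighted by powers of `p`, and the degree weights make them
`O(L n^{v(H)} p^{e(H)-1})` once the counts of proper subgraphs are bounded; those bounds come by
induction on the number of edges, comparing with the counts at `Q₀`. Multilinearity of the count
and convexity of the dual norm extend everything from Boolean tensors to the convex hull of `C`. -/

theorem Finset.prod_eq_ite_of_forall_eq_zero_or_one {α : Type*} {s : Finset α} {v : α → ℝ}
    [Decidable (∀ a ∈ s, v a = 1)] (h : ∀ a ∈ s, v a = 0 ∨ v a = 1) :
    ∏ a ∈ s, v a = if ∀ a ∈ s, v a = 1 then 1 else 0 := by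
  split
  case isTrue hall => exact prod_eq_one hall
  case isFalse hall =>
    push Not at hall
    obtain ⟨a, ha, hv⟩ := hall
    exact prod_eq_zero ha ((h a ha).resolve_right hv)

section Convexity

variable {E : Type*} [AddCommGroup E] [Module ℝ E]

theorem ConvexOn.map_sub_le_of_mem_convexHull {g : E → ℝ} (hg : ConvexOn ℝ Set.univ g)
    {s : Set E} {c : ℝ} (hs : ∀ a ∈ s, ∀ b ∈ s, g (a - b) ≤ c) {x y : E}
    (hx : x ∈ convexHull ℝ s) (hy : y ∈ convexHull ℝ s) : g (x - y) ≤ c := by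
  have hconv := (hg.comp_linearMap (LinearMap.fst ℝ E E - LinearMap.snd ℝ E E)).convex_le c
  have hsub := convexHull_min (s := s ×ˢ s) ?_ hconv
  · rw [convexHull_prod] at hsub
    exact (hsub (Set.mk_mem_prod hx hy)).2
  · exact fun q hq => ⟨Set.mem_univ _, hs q.1 hq.1 q.2 hq.2⟩

theorem le_of_convexOn_update {ι : Type*} [DecidableEq ι] {g : (ι → E) → ℝ} {s : Set E}
    {t : Finset ι} {c : ℝ} (hg : ∀ i ∈ t, ∀ U, ConvexOn ℝ Set.univ fun R => g (update U i R))
    (hbase : ∀ U, (∀ i ∈ t, U i ∈ s) → g U ≤ c) {U : ι → E}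
    (hU : ∀ i ∈ t, U i ∈ convexHull ℝ s) : g U ≤ c := by
  suffices key : ∀ u ⊆ t, ∀ U : ι → E, (∀ i ∈ u, U i ∈ convexHull ℝ s) →
      (∀ i ∈ t, i ∉ u → U i ∈ s) → g U ≤ c from
    key t subset_rfl U hU fun i hi hit => absurd hi hit
  intro u
  induction u using Finset.induction_on with
  | empty => exact fun _ U _ hU => hbase U fun i hi => hU i hi (Finset.notMem_empty i)
  | @insert a u ha IH =>
    intro hau U hUu hUt
    have hslot : s ⊆ {R | R ∈ Set.univ ∧ g (update U a R) ≤ c} := by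
      refine fun R hR => ⟨Set.mem_univ R, IH ((Finset.subset_insert a u).trans hau) _
        (fun i hi => ?_) (fun i hi hiu => ?_)⟩
      · rw [update_of_ne (ne_of_mem_of_not_mem hi ha)]
        exact hUu i (Finset.mem_insert_of_mem hi)
      · rcases eq_or_ne i a with rfl | hia
        · rwa [update_self]
        · rw [update_of_ne hia]
          exact hUt i hi (by simp [hia, hiu])
    have := convexHull_min hslot ((hg a (hau (Finset.mem_insert_self a u)) U).convex_le c)
      (hUu a (Finset.mem_insert_self a u))
    simpa using this.2

end Convexity

theorem abs_sub_le_card_mul_of_update {ι : Type*} [DecidableEq ι] {F : Type*}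
    {g : (ι → F) → ℝ} {s : Set F} {t : Finset ι} {B : ℝ}
    (hloc : ∀ U V : ι → F, (∀ i ∈ t, U i = V i) → g U = g V)
    (hstep : ∀ i ∈ t, ∀ U : ι → F, (∀ j ∈ t, U j ∈ s) → ∀ R ∈ s, |g (update U i R) - g U| ≤ B)
    {T T' : ι → F} (hT : ∀ i ∈ t, T i ∈ s) (hT' : ∀ i ∈ t, T' i ∈ s) :
    |g T - g T'| ≤ t.card * B := by
  suffices key : ∀ u ⊆ t, ∀ T : ι → F, (∀ i ∈ t, T i ∈ s) →
      (∀ i ∈ t, i ∉ u → T i = T' i) → |g T - g T'| ≤ u.card * B from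
    key t subset_rfl T hT fun i hi hit => absurd hi hit
  intro u
  induction u using Finset.induction_on with
  | empty =>
    intro _ T _ hTT'
    rw [hloc T T' fun i hi => hTT' i hi (Finset.notMem_empty i)]
    simp
  | @insert a u ha IH =>
    intro hau T hTs hTT'
    have hat : a ∈ t := hau (Finset.mem_insert_self a u)
    set T₁ := update T a (T' a)
    have hT₁s : ∀ i ∈ t, T₁ i ∈ s := fun i hi => by
      rcases eq_or_ne i a with rfl | hia
      · simpa [T₁] using hT' i hi
      · simpa [T₁, hia] using hTs i hi
    have hT₁ : ∀ i ∈ t, i ∉ u → T₁ i = T' i := fun i hi hiu => by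
      rcases eq_or_ne i a with rfl | hia
      · simp [T₁]
      · simpa [T₁, hia] using hTT' i hi (by simp [hia, hiu])
    calc |g T - g T'| ≤ |g T₁ - g T| + |g T₁ - g T'| := by
          rw [abs_sub_comm (g T₁)]; exact abs_sub_le _ _ _
      _ ≤ B + u.card * B :=
          add_le_add (hstep a hat T hTs _ (hT' a hat))
            (IH ((Finset.subset_insert a u).trans hau) T₁ hT₁s hT₁)
      _ = (insert a u).card * B := by rw [Finset.card_insert_of_notMem ha]; push_cast; ring

section Tensors

variable {n r : ℕ}

def symmTensors (n r : ℕ) : Submodule ℝ (Tensor n r) where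
  carrier := {Z | (∀ (σ : Equiv.Perm (Fin r)) (x : Fin r → Fin n), Z (x ∘ σ) = Z x) ∧
    ∀ x, ¬Function.Injective x → Z x = 0}
  add_mem' hZ hW := ⟨fun σ x => by simp [hZ.1 σ x, hW.1 σ x],
    fun x hx => by simp [hZ.2 x hx, hW.2 x hx]⟩
  zero_mem' := ⟨fun _ _ => rfl, fun _ _ => rfl⟩
  smul_mem' a Z hZ := ⟨fun σ x => by simp [hZ.1 σ x], fun x hx => by simp [hZ.2 x hx]⟩

theorem adjSet_subset_symmTensors : adjSet n r ⊆ symmTensors n r :=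
  fun _ hA => ⟨hA.1, hA.2.2⟩

theorem convexHull_subset_symmTensors {Cs : Set (Tensor n r)} (hCs : Cs ⊆ adjSet n r) :
    convexHull ℝ Cs ⊆ symmTensors n r :=
  convexHull_min (hCs.trans adjSet_subset_symmTensors) (Submodule.convex _)

theorem setEval_image_of_injective {Z : Tensor n r} (hZ : Z ∈ symmTensors n r)
    {x : Fin r → Fin n} (hx : Function.Injective x) (h : (univ.image x).card = r) :
    setEval Z ⟨univ.image x, h⟩ = Z x := by
  set I := univ.image x
  let toI : Fin r ≃ I := Equiv.ofBijective (fun k => ⟨x k, mem_image_of_mem x (mem_univ k)⟩)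
    ((Fintype.bijective_iff_injective_and_card _).2
      ⟨fun _ _ hk => hx (congrArg Subtype.val hk), by simp [h]⟩)
  let σ : Equiv.Perm (Fin r) := toI.trans (I.orderIsoOfFin h).toEquiv.symm
  have hσ : (fun k => ((I.orderIsoOfFin h) k).1) ∘ σ = x := by
    funext k
    change ((I.orderIsoOfFin h) ((I.orderIsoOfFin h).symm (toI k))).1 = x k
    rw [OrderIso.apply_symm_apply]
    rfl
  rw [setEval, ← hZ.1 σ, hσ]

theorem edgeEval_of_image_eq {V : Type} [DecidableEq V] {Z : Tensor n r}
    (hZ : Z ∈ symmTensors n r) {φ : V → Fin n} {e : Finset V} {x : Fin r → Fin n}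
    (h : e.image φ = univ.image x) : edgeEval Z φ e = Z x := by
  unfold edgeEval
  rw [h]
  by_cases hx : Function.Injective x
  · have hcard : (univ.image x).card = r := by simp [card_image_of_injective _ hx]
    rw [dif_pos hcard, setEval_image_of_injective hZ hx]
  · have hcard : (univ.image x).card ≠ r := fun hc => hx <| by
      simpa using (card_image_iff.1 (hc.trans (by simp)) : Set.InjOn x _)
    rw [dif_neg hcard, hZ.2 x hx]

theorem edgeEval_add {V : Type} [DecidableEq V] (Z W : Tensor n r) (φ : V → Fin n)
    (e : Finset V) : edgeEval (Z + W) φ e = edgeEval Z φ e + edgeEval W φ e := by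
  unfold edgeEval setEval
  split <;> simp

theorem edgeEval_smul {V : Type} [DecidableEq V] (a : ℝ) (Z : Tensor n r) (φ : V → Fin n)
    (e : Finset V) : edgeEval (a • Z) φ e = a * edgeEval Z φ e := by
  unfold edgeEval setEval
  split <;> simp

theorem edgeEval_eq_zero_or_one {V : Type} [DecidableEq V] {A : Tensor n r}
    (hA : A ∈ adjSet n r) (φ : V → Fin n) (e : Finset V) :
    edgeEval A φ e = 0 ∨ edgeEval A φ e = 1 := by
  unfold edgeEval setEval
  split
  · exact hA.2.1 _
  · exact Or.inl rfl

end Tensors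

section DualNorm

variable {n r : ℕ} (p : ℝ) (Bw : WBase r)

theorem testFun_eq_ite (f : Factors n r) (x : Fin r → Fin n) :
    testFun Bw f x = if ∀ b ∈ Bw.B, f b (fun v => x v.1) = true then 1 else 0 := by
  unfold testFun
  convert prod_boole (s := Bw.B) (p := fun b => f b (fun v => x v.1) = true)

theorem testFun_nonneg (f : Factors n r) (x : Fin r → Fin n) : 0 ≤ testFun Bw f x := by
  rw [testFun_eq_ite]; split <;> norm_num

theorem testNorm_nonneg (f : Factors n r) : 0 ≤ testNorm p Bw f :=
  (sum_nonneg fun _ _ => abs_nonneg _).trans (le_max_left _ _)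

theorem testNorm_pos {f : Factors n r} (hf : ∃ x, testFun Bw f x ≠ 0) :
    0 < testNorm p Bw f := by
  obtain ⟨x, hx⟩ := hf
  exact ((abs_pos.2 hx).trans_le (single_le_sum (fun y _ => abs_nonneg (testFun Bw f y))
    (mem_univ x))).trans_le (le_max_left _ _)

theorem dualNorm_nonneg (Z : Tensor n r) : 0 ≤ dualNorm n p Bw Z :=
  Real.iSup_nonneg fun f => by
    split
    · exact div_nonneg (abs_nonneg _) (testNorm_nonneg p Bw f)
    · exact le_rfl

theorem abs_sum_mul_testFun_le (Z : Tensor n r) (f : Factors n r) :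
    |∑ x, Z x * testFun Bw f x| ≤ dualNorm n p Bw Z * testNorm p Bw f := by
  by_cases hf : ∃ x, testFun Bw f x ≠ 0
  · have hle : |∑ x, Z x * testFun Bw f x| / testNorm p Bw f ≤ dualNorm n p Bw Z := by
      refine le_trans ?_ (le_ciSup (Set.finite_range _).bddAbove f)
      simp only [if_pos hf, le_refl]
    rwa [div_le_iff₀ (testNorm_pos p Bw hf)] at hle
  · simp only [not_exists, not_not] at hf
    simp only [hf, mul_zero, sum_const_zero, abs_zero]
    exact mul_nonneg (dualNorm_nonneg p Bw Z) (testNorm_nonneg p Bw f)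

theorem dualNorm_le_of_forall {Z : Tensor n r} {M : ℝ} (hM : 0 ≤ M)
    (h : ∀ f, |∑ x, Z x * testFun Bw f x| ≤ M * testNorm p Bw f) : dualNorm n p Bw Z ≤ M :=
  Real.iSup_le (fun f => by
    split
    case isTrue hf => exact (div_le_iff₀ (testNorm_pos p Bw hf)).2 (h f)
    case isFalse => exact hM) hM

theorem convexOn_dualNorm : ConvexOn ℝ Set.univ (dualNorm n p Bw) := by
  refine ⟨convex_univ, fun Z₁ _ Z₂ _ a b ha hb _ => dualNorm_le_of_forall p Bw
    (by have := dualNorm_nonneg p Bw Z₁; have := dualNorm_nonneg p Bw Z₂; positivity)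
    fun f => ?_⟩
  have hsum : ∑ x, (a • Z₁ + b • Z₂) x * testFun Bw f x
      = a * ∑ x, Z₁ x * testFun Bw f x + b * ∑ x, Z₂ x * testFun Bw f x := by
    simp only [Pi.add_apply, Pi.smul_apply, smul_eq_mul, mul_sum, ← sum_add_distrib]
    exact sum_congr rfl fun x _ => by ring
  rw [hsum, smul_eq_mul, smul_eq_mul, add_mul, mul_assoc, mul_assoc]
  refine (abs_add_le _ _).trans (add_le_add ?_ ?_) <;>
    rw [abs_mul, abs_of_nonneg ‹_›] <;>
    exact mul_le_mul_of_nonneg_left (abs_sum_mul_testFun_le p Bw _ f) ‹_›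

theorem testNorm_le_sum (hp : 0 ≤ p) (f : Factors n r) :
    testNorm p Bw f ≤ ∑ x, testFun Bw f x
      + ∑ b ∈ Bw.B, (n : ℝ) ^ (r - b.card) * p ^ (Bw.dstar - Bw.d b) * facNorm1 f b := by
  have hterm : ∀ b, 0 ≤ (n : ℝ) ^ (r - b.card) * p ^ (Bw.dstar - Bw.d b) * facNorm1 f b :=
    fun b => by unfold facNorm1; positivity
  have hfirst : 0 ≤ ∑ x, testFun Bw f x := sum_nonneg fun x _ => testFun_nonneg Bw f x
  refine max_le ?_
    (Real.iSup_le (fun b => ?_) (add_nonneg hfirst (sum_nonneg fun b _ => hterm b)))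
  · simp only [abs_of_nonneg (testFun_nonneg Bw f _)]
    exact le_add_of_nonneg_right (sum_nonneg fun b _ => hterm b)
  · by_cases hb : b ∈ Bw.B
    · rw [ciSup_pos hb]
      exact le_add_of_nonneg_of_le hfirst (single_le_sum (fun b _ => hterm b) hb)
    · rw [ciSup_neg hb, Real.sSup_empty]
      exact add_nonneg hfirst (sum_nonneg fun b _ => hterm b)

theorem dualNorm_le_bsDualNorm {H : RGraph r} (S : BaseSystem H) (E₀ : Finset (Finset H.V))
    (Z : Tensor n r) (e : {e // e ∈ H.E}) : dualNorm n p (S.wb E₀ e) Z ≤ bsDualNorm S E₀ p Z :=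
  le_ciSup (f := fun e => dualNorm n p (S.wb E₀ e) Z) (Set.finite_range _).bddAbove e

end DualNorm

section HomCounts

variable {n r : ℕ} {H : RGraph r}

/-- Like `homColl`, but for any edge set and with a tensor for every vertex set, so that the
tensor on a single edge can be replaced with `Function.update`. -/
noncomputable def homFam (H : RGraph r) (E₀ : Finset (Finset H.V))
    (T : Finset H.V → Tensor n r) : ℝ :=
  ∑ φ : H.V → Fin n, ∏ e ∈ E₀, edgeEval (T e) φ e

theorem homFam_congr {E₀ : Finset (Finset H.V)} {T₁ T₂ : Finset H.V → Tensor n r}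
    (h : ∀ e ∈ E₀, T₁ e = T₂ e) : homFam H E₀ T₁ = homFam H E₀ T₂ :=
  sum_congr rfl fun _ _ => prod_congr rfl fun e he => by rw [h e he]

theorem homFam_empty (T : Finset H.V → Tensor n r) :
    homFam H ∅ T = (n : ℝ) ^ Fintype.card H.V := by
  simp [homFam]

theorem homColl_eq_homFam (P : {e // e ∈ H.E} → Tensor n r) :
    homColl H P = homFam H H.E fun e => if h : e ∈ H.E then P ⟨e, h⟩ else 0 := by
  refine sum_congr rfl fun φ _ => ?_
  rw [← prod_attach H.E, univ_eq_attach]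
  exact prod_congr rfl fun e _ => by simp only [dif_pos e.2]

noncomputable def homSlot (H : RGraph r) (E₀ : Finset (Finset H.V))
    (T : Finset H.V → Tensor n r) (e : Finset H.V) : Tensor n r →ₗ[ℝ] ℝ where
  toFun R := ∑ φ : H.V → Fin n, edgeEval R φ e * ∏ e' ∈ E₀.erase e, edgeEval (T e') φ e'
  map_add' Z W := by simp only [edgeEval_add, add_mul, sum_add_distrib]
  map_smul' a Z := by simp only [edgeEval_smul, mul_assoc, ← mul_sum, RingHom.id_apply,
    smul_eq_mul]

theorem homFam_update {E₀ : Finset (Finset H.V)} {e : Finset H.V} (he : e ∈ E₀)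
    (T : Finset H.V → Tensor n r) (R : Tensor n r) :
    homFam H E₀ (update T e R) = homSlot H E₀ T e R := by
  refine sum_congr rfl fun φ _ => ?_
  rw [← mul_prod_erase E₀ _ he, update_self]
  exact congrArg _ (prod_congr rfl fun e' he' => by rw [update_of_ne (ne_of_mem_erase he')])

end HomCounts

section Glue

variable {n r : ℕ} {H : RGraph r} (S : BaseSystem H) (e : {e // e ∈ H.E})

noncomputable def BaseSystem.embEquiv : Fin r ≃ {v // v ∈ e.1} :=
  Equiv.ofBijective (fun k => ⟨S.emb e k, S.emb_mem e k⟩)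
    ((Fintype.bijective_iff_injective_and_card _).2
      ⟨fun _ _ hk => S.emb_inj e (congrArg Subtype.val hk), by simp [H.card_edge e.1 e.2]⟩)

/-- A labelling `V(H) → [n]` is a labelling `x` of the edge `e` (read through `S.emb e`)
together with a labelling `ψ` of the vertices off `e`. -/
noncomputable def BaseSystem.glue :
    (Fin r → Fin n) × ({v // v ∉ e.1} → Fin n) ≃ (H.V → Fin n) :=
  (((S.embEquiv e).arrowCongr (Equiv.refl (Fin n))).prodCongr (Equiv.refl _)).trans
    (Equiv.piEquivPiSubtypeProd (· ∈ e.1) fun _ => Fin n).symm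

theorem BaseSystem.sum_glue (G : (H.V → Fin n) → ℝ) :
    ∑ φ, G φ = ∑ ψ : {v // v ∉ e.1} → Fin n, ∑ x : Fin r → Fin n, G (S.glue e (x, ψ)) := by
  rw [← (S.glue e).sum_comp, Fintype.sum_prod_type, sum_comm]

variable {S e}

theorem BaseSystem.glue_emb (x : Fin r → Fin n) (ψ : {v // v ∉ e.1} → Fin n) (k : Fin r) :
    S.glue e (x, ψ) (S.emb e k) = x k := by
  simp only [BaseSystem.glue, Equiv.piEquivPiSubtypeProd, Equiv.symm_mk, Equiv.trans_apply,
    Equiv.prodCongr_apply, Equiv.coe_refl, Prod.map_apply, id_eq, Equiv.coe_fn_mk,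
    S.emb_mem e k, ↓reduceDIte, Equiv.arrowCongr_apply, Function.comp_apply]
  exact congrArg x ((S.embEquiv e).symm_apply_apply k)

theorem BaseSystem.glue_of_notMem (x : Fin r → Fin n) (ψ : {v // v ∉ e.1} → Fin n) {v : H.V}
    (hv : v ∉ e.1) : S.glue e (x, ψ) v = ψ ⟨v, hv⟩ := by
  simp [BaseSystem.glue, Equiv.piEquivPiSubtypeProd, hv]

theorem BaseSystem.mem_vimage {b : Finset (Fin r)} {v : H.V} :
    v ∈ S.vimage e b ↔ ∃ k ∈ b, S.emb e k = v :=
  mem_image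

theorem BaseSystem.image_glue (x : Fin r → Fin n) (ψ : {v // v ∉ e.1} → Fin n) :
    e.1.image (S.glue e (x, ψ)) = univ.image x := by
  have he : e.1 = (univ : Finset (Fin r)).image (S.emb e) :=
    (eq_of_subset_of_card_le (fun v hv => by
      obtain ⟨k, -, rfl⟩ := mem_image.1 hv; exact S.emb_mem e k)
      (by simp [card_image_of_injective _ (S.emb_inj e), H.card_edge e.1 e.2])).symm
  generalize hg : S.glue e (x, ψ) = g
  rw [he, image_image]
  exact image_congr fun k _ => hg ▸ S.glue_emb x ψ k

theorem BaseSystem.edgeEval_glue {Z : Tensor n r} (hZ : Z ∈ symmTensors n r)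
    (x : Fin r → Fin n) (ψ : {v // v ∉ e.1} → Fin n) :
    edgeEval Z (S.glue e (x, ψ)) e.1 = Z x :=
  edgeEval_of_image_eq hZ (S.image_glue x ψ)

theorem BaseSystem.edgeEval_glue_congr (Z : Tensor n r) {b : Finset (Fin r)}
    {x₁ x₂ : Fin r → Fin n} (hx : ∀ k ∈ b, x₁ k = x₂ k) (ψ : {v // v ∉ e.1} → Fin n)
    {e' : Finset H.V} (he' : e' ∩ e.1 ⊆ S.vimage e b) :
    edgeEval Z (S.glue e (x₁, ψ)) e' = edgeEval Z (S.glue e (x₂, ψ)) e' := by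
  unfold edgeEval
  rw [image_congr fun v hv => ?_]
  by_cases hve : v ∈ e.1
  · obtain ⟨k, hk, rfl⟩ := S.mem_vimage.1 (he' (mem_inter.2 ⟨hv, hve⟩))
    rw [S.glue_emb, S.glue_emb, hx k hk]
  · rw [S.glue_of_notMem _ _ hve, S.glue_of_notMem _ _ hve]

end Glue

section Restrict

variable {n r : ℕ}

def extendCoords (hn : 0 < n) (b : Finset (Fin r)) (y : {k // k ∈ b} → Fin n) :
    Fin r → Fin n :=
  fun k => if h : k ∈ b then y ⟨k, h⟩ else ⟨0, hn⟩

theorem extendCoords_restrict (hn : 0 < n) (b : Finset (Fin r)) (x : Fin r → Fin n) :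
    ∀ k ∈ b, extendCoords hn b (fun v => x v.1) k = x k :=
  fun _ hk => dif_pos hk

theorem sum_comp_restrict (b : Finset (Fin r)) (g : ({k // k ∈ b} → Fin n) → ℝ) :
    ∑ x : Fin r → Fin n, g (fun v => x v.1) = (n : ℝ) ^ (r - b.card) * ∑ y, g y := by
  rw [← (Equiv.piEquivPiSubtypeProd (· ∈ b) fun _ => Fin n).symm.sum_comp,
    Fintype.sum_prod_type]
  simp [mul_sum, Fintype.card_subtype_compl]

end Restrict

section Swap

variable {n r : ℕ} {H : RGraph r} (S : BaseSystem H) (e : {e // e ∈ H.E})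

def BaseSystem.coveredBy (t : Finset (Finset H.V)) (b : Finset (Fin r)) :
    Finset (Finset H.V) :=
  t.filter fun e' => e' ∩ e.1 ⊆ S.vimage e b

/-- Every edge of `E₀ ∖ {e}` not covered by `b` is counted by `d^H(e)` but not by
`d^H_b(e)`; this is what makes the powers of `p` add up in the swapping lemma. -/
theorem BaseSystem.card_sub_one_le_dstar_sub_d_add {E₀ : Finset (Finset H.V)} (hE₀ : E₀ ⊆ H.E)
    (he : e.1 ∈ E₀) {b : Finset (Fin r)} (hb : b ≠ univ) :
    E₀.card - 1 ≤ ((S.wb H.E e).dstar - (S.wb H.E e).d b)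
      + (S.coveredBy e (E₀.erase e.1) b).card := by
  unfold BaseSystem.coveredBy
  set M := H.E.filter fun e' => e' ≠ e.1 ∧ (e' ∩ e.1).Nonempty
  set N := H.E.filter fun e' => (e' ∩ e.1).Nonempty ∧ e' ∩ e.1 ⊆ S.vimage e b
  have he_not : ¬e.1 ⊆ S.vimage e b := fun hsub => by
    have := (card_le_card hsub).trans card_image_le
    rw [H.card_edge e.1 e.2] at this
    exact absurd (card_lt_card (ssubset_univ_iff.2 hb)) (by simpa using this)
  have hNM : N ⊆ M := fun e' he' => by
    simp only [N, M, mem_filter] at he' ⊢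
    exact ⟨he'.1, fun h => he_not (by simpa [h] using he'.2.2), he'.2.1⟩
  have huncov : (E₀.erase e.1).filter (fun e' => ¬e' ∩ e.1 ⊆ S.vimage e b) ⊆ M \ N :=
    fun e' he' => by
      simp only [mem_filter, mem_erase] at he'
      simp only [M, N, mem_sdiff, mem_filter, not_and]
      exact ⟨⟨hE₀ he'.1.2, he'.1.1, nonempty_iff_ne_empty.2 fun h => he'.2 (by simp [h])⟩,
        fun _ _ => he'.2⟩
  have hsplit := card_filter_add_card_filter_not (s := E₀.erase e.1)
    (fun e' => e' ∩ e.1 ⊆ S.vimage e b)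
  have := card_le_card huncov
  rw [card_sdiff_of_subset hNM, card_erase_of_mem he] at *
  change _ ≤ M.card - N.card + _
  omega

variable {S e}

/-- The test tensor that detects, for fixed `ψ`, the product over `t` of the Boolean tensors
`U e'`: the factor at `b` tests the edges whose trace on `e` is covered by `b`. -/
noncomputable def BaseSystem.probe (hn : 0 < n) (t : Finset (Finset H.V))
    (U : Finset H.V → Tensor n r) (ψ : {v // v ∉ e.1} → Fin n) : Factors n r := fun b y =>
  decide (∀ e' ∈ S.coveredBy e t b,
    edgeEval (U e') (S.glue e (extendCoords hn b y, ψ)) e' = 1)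

variable (hn : 0 < n) {t : Finset (Finset H.V)} {U : Finset H.V → Tensor n r}

theorem BaseSystem.prod_edgeEval_eq_ite (hU : ∀ e' ∈ t, U e' ∈ adjSet n r)
    (b : Finset (Fin r)) (y : {k // k ∈ b} → Fin n) (ψ : {v // v ∉ e.1} → Fin n) :
    ∏ e' ∈ S.coveredBy e t b, edgeEval (U e') (S.glue e (extendCoords hn b y, ψ)) e'
      = if S.probe hn t U ψ b y then 1 else 0 := by
  rw [prod_eq_ite_of_forall_eq_zero_or_one (s := S.coveredBy e t b) fun e' he' =>
    edgeEval_eq_zero_or_one (hU e' (mem_filter.1 he').1) _ _]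
  simp [BaseSystem.probe]

theorem BaseSystem.testFun_probe (hU : ∀ e' ∈ t, U e' ∈ adjSet n r) (E₀ : Finset (Finset H.V))
    (hcov : ∀ e' ∈ t, ∃ b ∈ S.B e, e' ∩ e.1 ⊆ S.vimage e b)
    (ψ : {v // v ∉ e.1} → Fin n) (x : Fin r → Fin n) :
    testFun (S.wb E₀ e) (S.probe hn t U ψ) x
      = ∏ e' ∈ t, edgeEval (U e') (S.glue e (x, ψ)) e' := by
  have hrestrict : ∀ b, ∀ e' ∈ S.coveredBy e t b,
      edgeEval (U e') (S.glue e (extendCoords hn b (fun v => x v.1), ψ)) e'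
        = edgeEval (U e') (S.glue e (x, ψ)) e' := fun b e' he' =>
    S.edgeEval_glue_congr _ (extendCoords_restrict hn b x) ψ (mem_filter.1 he').2
  rw [testFun_eq_ite, prod_eq_ite_of_forall_eq_zero_or_one fun e' he' =>
    edgeEval_eq_zero_or_one (hU e' he') _ _]
  refine if_congr ⟨fun h e' he' => ?_, fun h b _ => ?_⟩ rfl rfl
  · obtain ⟨b, hb, hsub⟩ := hcov e' he'
    have := h b hb
    simp only [BaseSystem.probe, decide_eq_true_eq] at this
    rw [← hrestrict b e' (mem_filter.2 ⟨he', hsub⟩)]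
    exact this e' (mem_filter.2 ⟨he', hsub⟩)
  · simp only [BaseSystem.probe, decide_eq_true_eq]
    exact fun e' he' => (hrestrict b e' he').trans (h e' (filter_subset _ _ he'))

theorem BaseSystem.sum_facNorm1_probe (hU : ∀ e' ∈ t, U e' ∈ adjSet n r)
    (b : Finset (Fin r)) :
    ∑ ψ : {v // v ∉ e.1} → Fin n, (n : ℝ) ^ (r - b.card) * facNorm1 (S.probe hn t U ψ) b
      = homFam H (S.coveredBy e t b) U := by
  rw [homFam, S.sum_glue e]
  refine sum_congr rfl fun ψ _ => ?_
  have hdep : ∀ x : Fin r → Fin n,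
      ∏ e' ∈ S.coveredBy e t b, edgeEval (U e') (S.glue e (x, ψ)) e'
        = ∏ e' ∈ S.coveredBy e t b,
            edgeEval (U e') (S.glue e (extendCoords hn b (fun v => x v.1), ψ)) e' :=
    fun x => prod_congr rfl fun e' he' =>
      S.edgeEval_glue_congr _ (fun k hk => (extendCoords_restrict hn b x k hk).symm) ψ
        (mem_filter.1 he').2
  rw [sum_congr rfl fun x _ => hdep x, sum_comp_restrict b (fun y =>
    ∏ e' ∈ S.coveredBy e t b, edgeEval (U e') (S.glue e (extendCoords hn b y, ψ)) e')]
  simp only [S.prod_edgeEval_eq_ite hn hU, sum_boole, facNorm1]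

theorem BaseSystem.sum_testNorm_probe_le (hU : ∀ e' ∈ t, U e' ∈ adjSet n r) {p : ℝ}
    (hp : 0 ≤ p) (E₀ : Finset (Finset H.V))
    (hcov : ∀ e' ∈ t, ∃ b ∈ S.B e, e' ∩ e.1 ⊆ S.vimage e b) :
    ∑ ψ : {v // v ∉ e.1} → Fin n, testNorm p (S.wb E₀ e) (S.probe hn t U ψ)
      ≤ homFam H t U + ∑ b ∈ S.B e,
          p ^ ((S.wb E₀ e).dstar - (S.wb E₀ e).d b) * homFam H (S.coveredBy e t b) U := by
  refine (sum_le_sum fun ψ _ => testNorm_le_sum _ _ hp _).trans_eq ?_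
  rw [sum_add_distrib]
  congr 1
  · rw [homFam, S.sum_glue e]
    exact sum_congr rfl fun ψ _ => sum_congr rfl fun x _ => S.testFun_probe hn hU E₀ hcov ψ x
  · rw [sum_comm]
    refine sum_congr rfl fun b _ => ?_
    rw [← S.sum_facNorm1_probe hn hU b, mul_sum]
    exact sum_congr rfl fun ψ _ => by ring

theorem BaseSystem.Good.exists_cover (hS : S.Good) {E₀ : Finset (Finset H.V)}
    (hE₀ : E₀ ⊆ H.E) : ∀ e' ∈ E₀.erase e.1, ∃ b ∈ S.B e, e' ∩ e.1 ⊆ S.vimage e b := by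
  intro e' he'
  by_cases hd : e' ∩ e.1 = ∅
  · exact ⟨∅, (hS e).1, by simp [hd]⟩
  · exact (hS e).2.2.2 e' (hE₀ (mem_of_mem_erase he')) (ne_of_mem_erase he')

/-- Splitting a labelling into `ψ` off `e` and `x` on `e`, the count is a sum over `ψ` of pairings
of `Z` with the test tensors `S.probe hn t U ψ`, whose norms add up to weighted counts of proper
subgraphs. -/
theorem BaseSystem.abs_homSlot_le (hS : S.Good) {p : ℝ} (hp0 : 0 < p) (hp1 : p ≤ 1) (hn : 0 < n)
    {E₀ : Finset (Finset H.V)} (hE₀ : E₀ ⊆ H.E) (he : e.1 ∈ E₀)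
    (hU : ∀ e' ∈ E₀.erase e.1, U e' ∈ adjSet n r) {Z : Tensor n r} (hZ : Z ∈ symmTensors n r)
    {δ : ℝ} (hZδ : dualNorm n p (S.wb H.E e) Z ≤ δ) {c : ℝ} (hc : 0 ≤ c)
    (hbound : ∀ F ⊆ E₀.erase e.1,
      homFam H F U ≤ c * ((n : ℝ) ^ Fintype.card H.V * p ^ F.card)) :
    |homSlot H E₀ U e.1 Z|
      ≤ (1 + 2 ^ r) * c * δ * ((n : ℝ) ^ Fintype.card H.V * p ^ (E₀.card - 1)) := by
  set t := E₀.erase e.1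
  set X := (n : ℝ) ^ Fintype.card H.V * p ^ (E₀.card - 1)
  have hcov := hS.exists_cover (e := e) hE₀
  have hδ : 0 ≤ δ := (dualNorm_nonneg p _ Z).trans hZδ
  have hpair : homSlot H E₀ U e.1 Z
      = ∑ ψ : {v // v ∉ e.1} → Fin n, ∑ x, Z x * testFun (S.wb H.E e) (S.probe hn t U ψ) x := by
    change ∑ φ, _ = _
    rw [S.sum_glue e]
    exact sum_congr rfl fun ψ _ => sum_congr rfl fun x _ => by
      rw [S.edgeEval_glue hZ, S.testFun_probe hn hU _ hcov]
  have htX : homFam H t U ≤ c * X := by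
    simpa [t, X, card_erase_of_mem he] using hbound t subset_rfl
  have hcovX : ∀ b ∈ S.B e, p ^ ((S.wb H.E e).dstar - (S.wb H.E e).d b)
      * homFam H (S.coveredBy e t b) U ≤ c * X := fun b hb => calc
    _ ≤ p ^ ((S.wb H.E e).dstar - (S.wb H.E e).d b)
          * (c * ((n : ℝ) ^ Fintype.card H.V * p ^ (S.coveredBy e t b).card)) :=
        mul_le_mul_of_nonneg_left (hbound _ (filter_subset _ _)) (by positivity)
    _ = c * (n : ℝ) ^ Fintype.card H.V
          * p ^ (((S.wb H.E e).dstar - (S.wb H.E e).d b) + (S.coveredBy e t b).card) := by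
        rw [pow_add]; ring
    _ ≤ c * X := by
        rw [mul_assoc]
        have hexp := S.card_sub_one_le_dstar_sub_d_add e hE₀ he ((hS e).2.1 b hb)
        exact mul_le_mul_of_nonneg_left (mul_le_mul_of_nonneg_left
          (pow_le_pow_of_le_one hp0.le hp1 hexp) (by positivity)) hc
  have hcardB : ((S.B e).card : ℝ) ≤ 2 ^ r := by
    exact_mod_cast (card_le_univ (S.B e)).trans (by simp)
  calc |homSlot H E₀ U e.1 Z|
      ≤ ∑ ψ : {v // v ∉ e.1} → Fin n, δ * testNorm p (S.wb H.E e) (S.probe hn t U ψ) := by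
        rw [hpair]
        exact (abs_sum_le_sum_abs _ _).trans (sum_le_sum fun ψ _ =>
          (abs_sum_mul_testFun_le p _ Z _).trans
            (mul_le_mul_of_nonneg_right hZδ (testNorm_nonneg p _ _)))
    _ ≤ δ * (c * X + ∑ _b ∈ S.B e, c * X) := by
        rw [← mul_sum]
        exact mul_le_mul_of_nonneg_left ((S.sum_testNorm_probe_le hn hU hp0.le _ hcov).trans
          (add_le_add htX (sum_le_sum hcovX))) hδ
    _ ≤ (1 + 2 ^ r) * c * δ * X := by
        rw [sum_const, nsmul_eq_mul, ← one_add_mul]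
        have := mul_le_mul_of_nonneg_right (add_le_add_left hcardB 1)
          (mul_nonneg hδ (by positivity : 0 ≤ c * X))
        linarith

end Swap

section Comparison

variable {n r : ℕ} {H : RGraph r} {S : BaseSystem H} {p : ℝ} {Cs : Set (Tensor n r)}

theorem BaseSystem.Good.abs_homFam_update_sub_le (hS : S.Good) (hp0 : 0 < p) (hp1 : p ≤ 1)
    (hn : 0 < n) (hCs : Cs ⊆ adjSet n r) {E₀ : Finset (Finset H.V)} (hE₀ : E₀ ⊆ H.E)
    {e : {e // e ∈ H.E}} (he : e.1 ∈ E₀) {δ : ℝ}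
    (hdiam : ∀ R ∈ convexHull ℝ Cs, ∀ R' ∈ convexHull ℝ Cs,
      dualNorm n p (S.wb H.E e) (R - R') ≤ δ) {c : ℝ} (hc : 0 ≤ c)
    (hbound : ∀ F ⊂ E₀, ∀ U : Finset H.V → Tensor n r, (∀ e' ∈ F, U e' ∈ convexHull ℝ Cs) →
      homFam H F U ≤ c * ((n : ℝ) ^ Fintype.card H.V * p ^ F.card))
    {U : Finset H.V → Tensor n r} (hU : ∀ e' ∈ E₀.erase e.1, U e' ∈ convexHull ℝ Cs)
    {R R' : Tensor n r} (hR : R ∈ convexHull ℝ Cs) (hR' : R' ∈ convexHull ℝ Cs) :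
    |homFam H E₀ (update U e.1 R) - homFam H E₀ (update U e.1 R')|
      ≤ (1 + 2 ^ r) * c * δ * ((n : ℝ) ^ Fintype.card H.V * p ^ (E₀.card - 1)) := by
  refine le_of_convexOn_update (s := Cs)
    (g := fun V => |homFam H E₀ (update V e.1 R) - homFam H E₀ (update V e.1 R')|)
    (fun e' he' V => ?_) (fun V hV => ?_) hU
  · have hslot : (fun R₁ => |homFam H E₀ (update (update V e' R₁) e.1 R)
          - homFam H E₀ (update (update V e' R₁) e.1 R')|)
        = fun R₁ =>
          ‖(homSlot H E₀ (update V e.1 R) e' - homSlot H E₀ (update V e.1 R') e') R₁‖ := by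
      funext R₁
      rw [update_comm (ne_of_mem_erase he'), update_comm (ne_of_mem_erase he'),
        homFam_update (mem_of_mem_erase he'), homFam_update (mem_of_mem_erase he'),
        Real.norm_eq_abs, LinearMap.sub_apply]
    rw [hslot]
    exact convexOn_univ_norm.comp_linearMap _
  · have hsymm := convexHull_subset_symmTensors hCs
    simp only [homFam_update he, ← map_sub]
    refine S.abs_homSlot_le hS hp0 hp1 hn hE₀ he (fun e' he' => hCs (hV e' he'))
      (sub_mem (hsymm hR) (hsymm hR')) (hdiam R hR R' hR') hc fun F hF => ?_
    exact hbound F (hF.trans_ssubset (erase_ssubset he)) V fun e' he' =>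
      subset_convexHull ℝ Cs (hV e' (hF he'))

theorem BaseSystem.Good.abs_homFam_sub_le (hS : S.Good) (hp0 : 0 < p) (hp1 : p ≤ 1)
    (hn : 0 < n) (hCs : Cs ⊆ adjSet n r) {E₀ : Finset (Finset H.V)} (hE₀ : E₀ ⊆ H.E) {ε : ℝ}
    (hdiam : ∀ e : {e // e ∈ H.E}, ∀ R ∈ convexHull ℝ Cs, ∀ R' ∈ convexHull ℝ Cs,
      dualNorm n p (S.wb H.E e) (R - R') ≤ ε * p) {c : ℝ} (hc : 0 ≤ c)
    (hbound : ∀ F ⊂ E₀, ∀ U : Finset H.V → Tensor n r, (∀ e' ∈ F, U e' ∈ convexHull ℝ Cs) →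
      homFam H F U ≤ c * ((n : ℝ) ^ Fintype.card H.V * p ^ F.card))
    {T T' : Finset H.V → Tensor n r} (hT : ∀ e ∈ E₀, T e ∈ convexHull ℝ Cs)
    (hT' : ∀ e ∈ E₀, T' e ∈ convexHull ℝ Cs) :
    |homFam H E₀ T - homFam H E₀ T'|
      ≤ E₀.card * (1 + 2 ^ r) * c * ε * ((n : ℝ) ^ Fintype.card H.V * p ^ E₀.card) := by
  calc |homFam H E₀ T - homFam H E₀ T'|
      ≤ E₀.card * ((1 + 2 ^ r) * c * (ε * p)
          * ((n : ℝ) ^ Fintype.card H.V * p ^ (E₀.card - 1))) := by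
        refine abs_sub_le_card_mul_of_update (fun _ _ => homFam_congr) (fun e he V hV R hR => ?_)
          hT hT'
        simpa using hS.abs_homFam_update_sub_le (e := ⟨e, hE₀ he⟩) hp0 hp1 hn hCs hE₀ he
          (hdiam _) hc hbound (fun e' he' => hV e' (mem_of_mem_erase he')) hR (hV e he)
    _ = E₀.card * (1 + 2 ^ r) * c * ε * ((n : ℝ) ^ Fintype.card H.V * p ^ E₀.card) := by
        rcases E₀.card with _ | k
        · simp
        · rw [Nat.add_sub_cancel, pow_succ]; ring

end Comparison

section Bound

variable {n r : ℕ} {H : RGraph r} {S : BaseSystem H} {p : ℝ} {Cs : Set (Tensor n r)}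

noncomputable def countingConst (r : ℕ) : ℕ → ℝ
  | 0 => 1
  | k + 1 => 1 + (k + 1) * (1 + 2 ^ r) * countingConst r k

theorem one_le_countingConst (r k : ℕ) : 1 ≤ countingConst r k := by
  induction k with
  | zero => exact le_rfl
  | succ k ih =>
    have : 0 ≤ ((k : ℝ) + 1) * (1 + 2 ^ r) * countingConst r k := by positivity
    exact le_add_of_nonneg_right this

theorem card_mul_countingConst_pred_le (r m : ℕ) :
    m * (1 + 2 ^ r) * countingConst r (m - 1) ≤ countingConst r m := by
  rcases m with _ | k <;> simp [countingConst]

theorem BaseSystem.Good.homFam_le_of_ssubset (hS : S.Good) (hp0 : 0 < p) (hp1 : p ≤ 1)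
    (hn : 0 < n) (hCs : Cs ⊆ adjSet n r) {ε : ℝ} (hε0 : 0 ≤ ε) (hε1 : ε ≤ 1)
    (hdiam : ∀ e : {e // e ∈ H.E}, ∀ R ∈ convexHull ℝ Cs, ∀ R' ∈ convexHull ℝ Cs,
      dualNorm n p (S.wb H.E e) (R - R') ≤ ε * p) {L : ℝ} (hL : 0 ≤ L)
    {Q₀ : Tensor n r} (hQ₀ : Q₀ ∈ convexHull ℝ Cs)
    (hQ₀bound : ∀ F ⊂ H.E, homE H F Q₀ ≤ L * ((n : ℝ) ^ Fintype.card H.V * p ^ F.card))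
    (k : ℕ) {F : Finset (Finset H.V)} (hF : F ⊂ H.E) (hFk : F.card ≤ k)
    {U : Finset H.V → Tensor n r} (hU : ∀ e ∈ F, U e ∈ convexHull ℝ Cs) :
    homFam H F U ≤ countingConst r k * L * ((n : ℝ) ^ Fintype.card H.V * p ^ F.card) := by
  induction k generalizing F U with
  | zero =>
    obtain rfl := card_eq_zero.1 (Nat.le_zero.1 hFk)
    simpa [countingConst, homFam_empty, homE] using hQ₀bound ∅ hF
  | succ k ih =>
    have hcomp : |homFam H F U - homE H F Q₀| ≤ _ := hS.abs_homFam_sub_le hp0 hp1 hn hCs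
      hF.subset hdiam (by have := one_le_countingConst r k; positivity)
      (fun F' hF' V hV => ih (hF'.trans hF) (by have := card_lt_card hF'; omega) hV)
      hU (T' := fun _ => Q₀) fun _ _ => hQ₀
    set X := (n : ℝ) ^ Fintype.card H.V * p ^ F.card
    have hX : 0 ≤ X := by positivity
    have hcoef : F.card * (1 + 2 ^ r) * (countingConst r k * L) * ε
        ≤ (k + 1) * (1 + 2 ^ r) * countingConst r k * L := by
      have := one_le_countingConst r k
      have : (F.card : ℝ) ≤ k + 1 := by exact_mod_cast hFk
      calc _ ≤ (k + 1) * (1 + 2 ^ r) * (countingConst r k * L) * 1 := by gcongr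
        _ = _ := by ring
    calc homFam H F U
        ≤ homE H F Q₀ + F.card * (1 + 2 ^ r) * (countingConst r k * L) * ε * X :=
          by linarith [le_abs_self (homFam H F U - homE H F Q₀)]
      _ ≤ L * X + (k + 1) * (1 + 2 ^ r) * countingConst r k * L * X :=
          add_le_add (hQ₀bound F hF) (mul_le_mul_of_nonneg_right hcoef hX)
      _ = countingConst r (k + 1) * L * X := by simp only [countingConst]; ring

end Bound

theorem statement2_general (r : ℕ) (H : RGraph r) :
    ∃ C : ℝ, 0 < C ∧
      ∀ n : ℕ, 1 ≤ n → ∀ p : ℝ, 0 < p → p < 1 →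
      ∀ S : BaseSystem H, S.Good → ∀ ε : ℝ, 0 < ε → ε ≤ 1 →
      ∀ Cs : Set (Tensor n r), Cs ⊆ adjSet n r →
      (∀ A₁ ∈ Cs, ∀ A₂ ∈ Cs, bsDualNorm S H.E p (fun x => A₁ x - A₂ x) ≤ ε * p) →
      ∀ L : ℝ, 1 ≤ L → ∀ Q₀ ∈ convexHull ℝ Cs,
      (∀ E' ⊆ H.E, E' ≠ H.E →
        homE H E' Q₀ / ((n : ℝ) ^ Fintype.card H.V * p ^ E'.card) ≤ L) →
      ∀ P Q : {e // e ∈ H.E} → Tensor n r,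
      (∀ e, P e ∈ convexHull ℝ Cs) → (∀ e, Q e ∈ convexHull ℝ Cs) →
      |tpColl H p P - tpColl H p Q| ≤ C * L * ε := by
  refine ⟨countingConst r H.E.card, one_pos.trans_le (one_le_countingConst r _), ?_⟩
  intro n hn p hp0 hp1 S hS ε hε0 hε1 Cs hCs hdiam L hL Q₀ hQ₀ hQ₀bound P Q hP hQ
  set X := (n : ℝ) ^ Fintype.card H.V * p ^ H.E.card
  have hX : 0 < X := by positivity
  have hdiam_hull : ∀ e : {e // e ∈ H.E}, ∀ R ∈ convexHull ℝ Cs, ∀ R' ∈ convexHull ℝ Cs,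
      dualNorm n p (S.wb H.E e) (R - R') ≤ ε * p := fun e _ hR _ hR' =>
    (convexOn_dualNorm p _).map_sub_le_of_mem_convexHull
      (fun A₁ h₁ A₂ h₂ => (dualNorm_le_bsDualNorm p S H.E _ e).trans (hdiam A₁ h₁ A₂ h₂)) hR hR'
  have hcomp := hS.abs_homFam_sub_le hp0 hp1.le hn hCs subset_rfl hdiam_hull
    (by have := one_le_countingConst r (H.E.card - 1); positivity)
    (fun F hF V hV => hS.homFam_le_of_ssubset hp0 hp1.le hn hCs hε0.le hε1 hdiam_hull
      (zero_le_one.trans hL) hQ₀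
      (fun F hF => (div_le_iff₀ (by positivity)).1 (hQ₀bound F hF.subset hF.ne)) _ hF
      (by have := card_lt_card hF; omega) hV)
    (T := fun e => if h : e ∈ H.E then P ⟨e, h⟩ else 0)
    (T' := fun e => if h : e ∈ H.E then Q ⟨e, h⟩ else 0)
    (fun e he => by simpa [he] using hP ⟨e, he⟩) (fun e he => by simpa [he] using hQ ⟨e, he⟩)
  rw [tpColl, tpColl, div_sub_div_same, abs_div, abs_of_pos hX, div_le_iff₀ hX,
    homColl_eq_homFam, homColl_eq_homFam]
  refine hcomp.trans ?_
  have := mul_le_mul_of_nonneg_right (card_mul_countingConst_pred_le r H.E.card)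
    (by positivity : 0 ≤ L * ε * X)
  linarith

theorem statement2 (r : ℕ) (hr : 2 ≤ r) (H : RGraph r) :
    ∃ C : ℝ, 0 < C ∧
      ∀ n : ℕ, 1 ≤ n → ∀ p : ℝ, 0 < p → p < 1 →
      ∀ S : BaseSystem H, S.Good → ∀ ε : ℝ, 0 < ε → ε ≤ 1 →
      ∀ Cs : Set (Tensor n r), Cs ⊆ adjSet n r →
      (∀ A₁ ∈ Cs, ∀ A₂ ∈ Cs, bsDualNorm S H.E p (fun x => A₁ x - A₂ x) ≤ ε * p) →
      ∀ L : ℝ, 1 ≤ L → ∀ Q₀ ∈ convexHull ℝ Cs,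
      (∀ E' ⊆ H.E, E' ≠ H.E →
        homE H E' Q₀ / ((n : ℝ) ^ Fintype.card H.V * p ^ E'.card) ≤ L) →
      ∀ P Q : {e // e ∈ H.E} → Tensor n r,
      (∀ e, P e ∈ convexHull ℝ Cs) → (∀ e, Q e ∈ convexHull ℝ Cs) →
      |tpColl H p P - tpColl H p Q| ≤ C * L * ε :=
  statement2_general r H
end
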